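/- arXiv:1804.00355 — 6 statements merged into one kernel-verified Lean document; each statement's English description precedes it below -/
import Mathlib

section
/- Let (Ω,P) be a measure space with σ-finite measure P and {p_μ : μ ∈ M} a family of probability densities w.r.t. P indexed by M ⊆ ℝ^m; for measurable φ : Ω → ℝ set Φ(φ;μ) = ln(∫_Ω e^{φ(ω)} p_μ(ω) P(dω)). Let K, I, the sets X_j, maps A_j, vector g and ε ∈ (0,1) be as in the linear-form recovery problem. For each pair 1 ≤ i,j ≤ I choose α_{ij} > 0 and a measurable φ_{ij} : Ω → ℝ for which all the quantities Ψ_{i,+}(α_{ij},φ_{ij}) and Ψ_{j,−}(α_{ij},φ_{ij}) are finite, and set ρ_{ij} = ½[Ψ_{i,+}(α_{ij},φ_{ij}) + Ψ_{j,−}(α_{ij},φ_{ij})], κ_{ij} = ½[Ψ_{j,−}(α_{ij},φ_{ij}) − Ψ_{i,+}(α_{ij},φ_{ij})], g_{ij}(ω^K) = Σ_{k=1}^K φ_{ij}(ω_k) + κ_{ij}, and define the estimate ĝ(ω^K) = ½[min_{i≤I} max_{j≤I} g_{ij}(ω^K) + max_{j≤I} min_{i≤I} g_{ij}(ω^K)].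 Let ρ_ℓ = max_{1≤j≤I} max[ρ_{ℓj}, ρ_{jℓ}] and ρ = max_{1≤i,j≤I} ρ_{ij}. Then for every ℓ ≤ I and every x ∈ X_ℓ, the p^K_{A_ℓ(x)}-probability of the event {|ĝ(ω^K) − g^T x| > ρ_ℓ} is at most ε; consequently Risk_ε[ĝ] ≤ ρ. -/
open MeasureTheory

/-- The distribution of `K` i.i.d. observations drawn from the distribution with density
`f` w.r.t. `P`: the `K`-fold product measure `P^K` weighted by the product density. -/
noncomputable def prodDensityMeasure {Ω : Type*} [MeasurableSpace Ω] (P : Measure Ω)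
    (K : ℕ) (f : Ω → ℝ) : Measure (Fin K → Ω) :=
  (Measure.pi fun _ : Fin K => P).withDensity fun y => ENNReal.ofReal (∏ k, f (y k))

/-- `Φ(φ; f) = ln ∫ e^{φ} f dP`. -/
noncomputable def logMGF {Ω : Type*} [MeasurableSpace Ω] (P : Measure Ω)
    (φ f : Ω → ℝ) : ℝ :=
  Real.log (∫ ω, Real.exp (φ ω) * f ω ∂P)

section LinearProblem

variable {Ω : Type*} [MeasurableSpace Ω] (P : Measure Ω) {m n : ℕ}
  {ι : Type*} [Fintype ι]
  (p : (Fin m → ℝ) → Ω → ℝ) (X : ι → Set (Fin n → ℝ))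
  (A : ι → (Fin n → ℝ) →ᵃ[ℝ] (Fin m → ℝ)) (g : Fin n → ℝ) (ε : ℝ) (K : ℕ)

/-- The set whose supremum is `Ψ_{ℓ,+}(β,ψ)`. -/
def PsiPlusSet (ℓ : ι) (β : ℝ) (ψ : Ω → ℝ) : Set ℝ :=
  {v | ∃ x ∈ X ℓ, v = (K : ℝ) * β * logMGF P (fun ω => ψ ω / β) (p (A ℓ x))
    - (∑ i, g i * x i) + β * Real.log (2 * (Fintype.card ι : ℝ) / ε)}

/-- The set whose supremum is `Ψ_{ℓ,−}(β,ψ)`. -/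
def PsiMinusSet (ℓ : ι) (β : ℝ) (ψ : Ω → ℝ) : Set ℝ :=
  {v | ∃ x ∈ X ℓ, v = (K : ℝ) * β * logMGF P (fun ω => -ψ ω / β) (p (A ℓ x))
    + (∑ i, g i * x i) + β * Real.log (2 * (Fintype.card ι : ℝ) / ε)}

/-- `Ψ_{ℓ,+}(β,ψ) = max_{x∈X_ℓ}[KβΦ(ψ/β; A_ℓ(x)) − gᵀx + β ln(2I/ε)]`. -/
noncomputable def PsiPlus (ℓ : ι) (β : ℝ) (ψ : Ω → ℝ) : ℝ :=
  sSup (PsiPlusSet P p X A g ε K ℓ β ψ)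

/-- `Ψ_{ℓ,−}(β,ψ) = max_{x∈X_ℓ}[KβΦ(−ψ/β; A_ℓ(x)) + gᵀx + β ln(2I/ε)]`. -/
noncomputable def PsiMinus (ℓ : ι) (β : ℝ) (ψ : Ω → ℝ) : ℝ :=
  sSup (PsiMinusSet P p X A g ε K ℓ β ψ)

end LinearProblem

/-! Fix `ℓ` and `x ∈ X_ℓ`. Chernoff's bound for the sum of the `K` i.i.d. values `φ_{ℓj}(ω_k)`,
taken at the exponent `1/α_{ℓj}`, shows that `g_{ℓj}` exceeds `gᵀx + ρ_{ℓj}` with probability at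
most `ε/(2I)`: the threshold `ρ_{ℓj} - κ_{ℓj} = Ψ_{ℓ,+}(α_{ℓj}, φ_{ℓj})` is exactly what that bound
requires. Symmetrically, by `Ψ_{ℓ,−}`, `g_{jℓ}` falls below `gᵀx − ρ_{jℓ}` with probability at most
`ε/(2I)`. Outside these `2I` events row `ℓ` of the matrix `(g_{ij})` lies below `gᵀx + ρ_ℓ` and its
column `ℓ` above `gᵀx − ρ_ℓ`, which traps `min_i max_j g_{ij} ≥ max_j min_i g_{ij}`, and hence
their midpoint `ĝ`, within `ρ_ℓ` of `gᵀx`. -/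

open Real Finset
open scoped ENNReal

section Minimax

variable {ι : Type*} [Fintype ι] [Nonempty ι]

noncomputable def minMax (G : ι → ι → ℝ) : ℝ :=
  univ.inf' univ_nonempty fun i => univ.sup' univ_nonempty fun j => G i j

noncomputable def maxMin (G : ι → ι → ℝ) : ℝ :=
  univ.sup' univ_nonempty fun j => univ.inf' univ_nonempty fun i => G i j

theorem maxMin_le_minMax (G : ι → ι → ℝ) : maxMin G ≤ minMax G :=
  le_inf' _ _ fun i _ => sup'_le _ _ fun j _ =>
    (inf'_le (fun i' => G i' j) (mem_univ i)).trans (le_sup' (fun j' => G i j') (mem_univ j))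

theorem minMax_le_of_forall_le {G : ι → ι → ℝ} {c : ℝ} (ℓ : ι) (h : ∀ j, G ℓ j ≤ c) :
    minMax G ≤ c :=
  (inf'_le _ (mem_univ ℓ)).trans (sup'_le _ _ fun j _ => h j)

theorem le_maxMin_of_forall_le {G : ι → ι → ℝ} {c : ℝ} (ℓ : ι) (h : ∀ i, c ≤ G i ℓ) :
    c ≤ maxMin G :=
  (le_inf' _ _ fun i _ => h i).trans
    (le_sup' (fun j => univ.inf' univ_nonempty fun i => G i j) (mem_univ ℓ))

theorem abs_midpoint_minMax_maxMin_sub_le {G : ι → ι → ℝ} {t R : ℝ} (ℓ : ι)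
    (hrow : ∀ j, G ℓ j ≤ t + R) (hcol : ∀ i, t - R ≤ G i ℓ) :
    |(1 / 2) * (minMax G + maxMin G) - t| ≤ R := by
  have hmin := minMax_le_of_forall_le ℓ hrow
  have hmax := le_maxMin_of_forall_le ℓ hcol
  have := maxMin_le_minMax G
  rw [abs_le]
  constructor <;> linarith

theorem measure_abs_midpoint_minMax_maxMin_sub_gt_le {Y : Type*} [MeasurableSpace Y]
    (μ : Measure Y) (G : ι → ι → Y → ℝ) (ℓ : ι) {t R : ℝ} {u v : ι → ℝ}
    (hu : ∀ j, u j ≤ R) (hv : ∀ i, v i ≤ R) {δ : ℝ≥0∞}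
    (hup : ∀ j, μ {y | t + u j < G ℓ j y} ≤ δ) (hlo : ∀ i, μ {y | G i ℓ y < t - v i} ≤ δ) :
    μ {y | R < |(1 / 2) * (minMax (fun i j => G i j y) + maxMin (fun i j => G i j y)) - t|}
      ≤ Fintype.card ι * (2 * δ) := by
  have hcover : {y | R < |(1 / 2) * (minMax (fun i j => G i j y)
      + maxMin (fun i j => G i j y)) - t|}
      ⊆ ⋃ j, ({y | t + u j < G ℓ j y} ∪ {y | G j ℓ y < t - v j}) := by
    intro y hy
    by_contra hy'
    simp only [Set.mem_iUnion, Set.mem_union, Set.mem_ofPred_eq, not_exists, not_or,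
      not_lt] at hy'
    refine (abs_midpoint_minMax_maxMin_sub_le ℓ (fun j => ?_) (fun i => ?_)).not_gt hy
    · linarith [(hy' j).1, hu j]
    · linarith [(hy' i).2, hv i]
  calc _ ≤ ∑ j, μ ({y | t + u j < G ℓ j y} ∪ {y | G j ℓ y < t - v j}) :=
        (measure_mono hcover).trans (measure_iUnion_fintype_le μ _)
    _ ≤ ∑ _j : ι, 2 * δ :=
        sum_le_sum fun j _ => (measure_union_le _ _).trans ((add_le_add (hup j) (hlo j)).trans
          (two_mul δ).ge)
    _ = Fintype.card ι * (2 * δ) := by rw [sum_const, card_univ, nsmul_eq_mul]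

end Minimax

theorem natCast_card_mul_two_mul_ofReal_div (ι : Type*) [Fintype ι] [Nonempty ι] (ε : ℝ) :
    (Fintype.card ι : ℝ≥0∞) * (2 * ENNReal.ofReal (ε / (2 * Fintype.card ι)))
      = ENNReal.ofReal ε := by
  have hcard : (0 : ℝ) < Fintype.card ι := Nat.cast_pos.mpr Fintype.card_pos
  rw [← ENNReal.ofReal_natCast, ← ENNReal.ofReal_ofNat 2, ← ENNReal.ofReal_mul zero_le_two,
    ← ENNReal.ofReal_mul hcard.le]
  congr 1
  field_simp

theorem nonneg_of_measure_lt_le {Y : Type*} [MeasurableSpace Y] {μ : Measure Y}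
    [IsProbabilityMeasure μ] {f : Y → ℝ} (hf : ∀ y, 0 ≤ f y) {r ε : ℝ} (hε1 : ε < 1)
    (h : μ {y | r < f y} ≤ ENNReal.ofReal ε) : 0 ≤ r := by
  by_contra! hr
  have huniv : {y | r < f y} = Set.univ := Set.eq_univ_of_forall fun y => hr.trans_le (hf y)
  rw [huniv, measure_univ] at h
  exact (h.trans_lt (ENNReal.ofReal_lt_one.mpr hε1)).false

theorem prod_le_exp_neg_mul_prod_exp_mul {κ : Type*} (t : Finset κ) {f q : κ → ℝ}
    (hq : ∀ k ∈ t, 0 ≤ q k) {s : ℝ} (hs : s ≤ ∑ k ∈ t, f k) :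
    ∏ k ∈ t, q k ≤ exp (-s) * ∏ k ∈ t, exp (f k) * q k := by
  rw [prod_mul_distrib, ← exp_sum, ← mul_assoc, ← exp_add]
  exact le_mul_of_one_le_left (prod_nonneg hq) (one_le_exp (by linarith))

-- At `a = 0` the right side is `exp 0 = 1`, since `log 0 = 0`.
theorem pow_le_exp_mul_log {a : ℝ} (ha : 0 ≤ a) (K : ℕ) : a ^ K ≤ exp (K * log a) := by
  rcases ha.eq_or_lt with rfl | ha
  · rcases K.eq_zero_or_pos with rfl | hK
    · simp
    · rw [zero_pow hK.ne']
      exact (exp_pos _).le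
  · rw [exp_nat_mul, exp_log ha]

section Chernoff

variable {Ω : Type*} [MeasurableSpace Ω] (P : Measure Ω) [SigmaFinite P] (K : ℕ)

theorem isProbabilityMeasure_prodDensityMeasure {q : Ω → ℝ} (hq0 : ∀ ω, 0 ≤ q ω)
    (hq1 : ∫ ω, q ω ∂P = 1) : IsProbabilityMeasure (prodDensityMeasure P K q) := by
  have hq : Integrable q P := Integrable.of_integral_ne_zero (by rw [hq1]; exact one_ne_zero)
  constructor
  rw [prodDensityMeasure, withDensity_apply _ MeasurableSet.univ, Measure.restrict_univ,
    ← ofReal_integral_eq_lintegral_ofReal (Integrable.fintype_prod fun _ => hq)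
      (ae_of_all _ fun y => prod_nonneg fun k _ => hq0 (y k)),
    integral_fintype_prod_eq_pow, hq1, one_pow, ENNReal.ofReal_one]

theorem prodDensityMeasure_lt_sum_le_exp {q f : Ω → ℝ} (hq0 : ∀ ω, 0 ≤ q ω)
    (hint : Integrable (fun ω => exp (f ω) * q ω) P) (s : ℝ) :
    prodDensityMeasure P K q {y | s < ∑ k, f (y k)}
      ≤ ENNReal.ofReal (exp (-s) * (∫ ω, exp (f ω) * q ω ∂P) ^ K) := by
  have hbound : Integrable (fun y : Fin K → Ω => exp (-s) * ∏ k, exp (f (y k)) * q (y k))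
      (Measure.pi fun _ => P) :=
    (Integrable.fintype_prod fun _ => hint).const_mul _
  rw [prodDensityMeasure, withDensity_apply']
  calc _ ≤ ∫⁻ y in {y | s < ∑ k, f (y k)},
          ENNReal.ofReal (exp (-s) * ∏ k, exp (f (y k)) * q (y k)) ∂(Measure.pi fun _ => P) :=
        setLIntegral_mono_ae hbound.aemeasurable.ennreal_ofReal.restrict
          (ae_of_all _ fun y hy => ENNReal.ofReal_le_ofReal
            (prod_le_exp_neg_mul_prod_exp_mul _ (fun k _ => hq0 (y k)) (le_of_lt hy)))
    _ ≤ ∫⁻ y, ENNReal.ofReal (exp (-s) * ∏ k, exp (f (y k)) * q (y k))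
          ∂(Measure.pi fun _ => P) := setLIntegral_le_lintegral _ _
    _ = _ := by
        rw [← ofReal_integral_eq_lintegral_ofReal hbound (ae_of_all _ fun y =>
            mul_nonneg (exp_pos _).le (prod_nonneg fun k _ =>
              mul_nonneg (exp_pos _).le (hq0 (y k)))),
          integral_const_mul, integral_fintype_prod_eq_pow (fun ω => exp (f ω) * q ω),
          Fintype.card_fin]

theorem prodDensityMeasure_lt_sum_le {q ψ : Ω → ℝ} (hq0 : ∀ ω, 0 ≤ q ω) {β : ℝ} (hβ : 0 < β)
    (hint : Integrable (fun ω => exp (ψ ω / β) * q ω) P) {δ s : ℝ} (hδ : 0 < δ)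
    (hs : K * β * logMGF P (fun ω => ψ ω / β) q + β * log δ⁻¹ ≤ s) :
    prodDensityMeasure P K q {y | s < ∑ k, ψ (y k)} ≤ ENNReal.ofReal δ := by
  set a := ∫ ω, exp (ψ ω / β) * q ω ∂P
  have ha : 0 ≤ a := integral_nonneg fun ω => mul_nonneg (exp_pos _).le (hq0 ω)
  have hexp : K * log a - s / β ≤ log δ := by
    have hs' : (K * log a - log δ) * β ≤ s := by
      rw [log_inv] at hs
      change K * β * log a + β * -log δ ≤ s at hs
      linarith
    linarith [(le_div_iff₀ hβ).mpr hs']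
  calc _ ≤ prodDensityMeasure P K q {y | s / β < ∑ k, ψ (y k) / β} :=
        measure_mono (Set.ofPred_subset_ofPred.mpr fun y hy => by
          simpa only [← sum_div] using div_lt_div_of_pos_right hy hβ)
    _ ≤ ENNReal.ofReal (exp (-(s / β)) * a ^ K) :=
        prodDensityMeasure_lt_sum_le_exp P K hq0 hint _
    _ ≤ ENNReal.ofReal δ := ENNReal.ofReal_le_ofReal <| calc
        exp (-(s / β)) * a ^ K ≤ exp (-(s / β)) * exp (K * log a) :=
          mul_le_mul_of_nonneg_left (pow_le_exp_mul_log ha K) (exp_pos _).le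
        _ ≤ exp (log δ) := by rw [← exp_add]; exact exp_le_exp.mpr (by linarith)
        _ = δ := exp_log hδ

end Chernoff

section PsiTails

variable {Ω : Type*} [MeasurableSpace Ω] (P : Measure Ω) [SigmaFinite P] {m n : ℕ}
  {ι : Type*} [Fintype ι] (p : (Fin m → ℝ) → Ω → ℝ) (X : ι → Set (Fin n → ℝ))
  (A : ι → (Fin n → ℝ) →ᵃ[ℝ] (Fin m → ℝ)) (g : Fin n → ℝ) {ε : ℝ} (K : ℕ)

theorem prodDensityMeasure_add_psiPlus_lt_sum_le {ℓ : ι} {x : Fin n → ℝ} (hx : x ∈ X ℓ)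
    (hp0 : ∀ ω, 0 ≤ p (A ℓ x) ω) (hε : 0 < ε) {β : ℝ} (hβ : 0 < β) {ψ : Ω → ℝ}
    (hint : Integrable (fun ω => exp (ψ ω / β) * p (A ℓ x) ω) P)
    (hbdd : BddAbove (PsiPlusSet P p X A g ε K ℓ β ψ)) :
    prodDensityMeasure P K (p (A ℓ x))
        {y | ∑ i, g i * x i + PsiPlus P p X A g ε K ℓ β ψ < ∑ k, ψ (y k)}
      ≤ ENNReal.ofReal (ε / (2 * Fintype.card ι)) := by
  have hcard : (0 : ℝ) < Fintype.card ι := Nat.cast_pos.mpr (Fintype.card_pos_iff.mpr ⟨ℓ⟩)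
  have hψ : K * β * logMGF P (fun ω => ψ ω / β) (p (A ℓ x)) - ∑ i, g i * x i
      + β * log (2 * Fintype.card ι / ε) ≤ PsiPlus P p X A g ε K ℓ β ψ :=
    le_csSup hbdd ⟨x, hx, rfl⟩
  refine prodDensityMeasure_lt_sum_le P K hp0 hβ hint (by positivity) ?_
  rw [inv_div]
  linarith

theorem prodDensityMeasure_sum_lt_sub_psiMinus_le {ℓ : ι} {x : Fin n → ℝ} (hx : x ∈ X ℓ)
    (hp0 : ∀ ω, 0 ≤ p (A ℓ x) ω) (hε : 0 < ε) {β : ℝ} (hβ : 0 < β) {ψ : Ω → ℝ}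
    (hint : Integrable (fun ω => exp (-ψ ω / β) * p (A ℓ x) ω) P)
    (hbdd : BddAbove (PsiMinusSet P p X A g ε K ℓ β ψ)) :
    prodDensityMeasure P K (p (A ℓ x))
        {y | ∑ k, ψ (y k) < ∑ i, g i * x i - PsiMinus P p X A g ε K ℓ β ψ}
      ≤ ENNReal.ofReal (ε / (2 * Fintype.card ι)) := by
  have hcard : (0 : ℝ) < Fintype.card ι := Nat.cast_pos.mpr (Fintype.card_pos_iff.mpr ⟨ℓ⟩)
  have hψ : K * β * logMGF P (fun ω => -ψ ω / β) (p (A ℓ x)) + ∑ i, g i * x i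
      + β * log (2 * Fintype.card ι / ε) ≤ PsiMinus P p X A g ε K ℓ β ψ :=
    le_csSup hbdd ⟨x, hx, rfl⟩
  refine le_trans (measure_mono (Set.ofPred_subset_ofPred.mpr fun y hy => ?_))
    (prodDensityMeasure_lt_sum_le P K (ψ := fun ω => -ψ ω)
      (s := PsiMinus P p X A g ε K ℓ β ψ - ∑ i, g i * x i) hp0 hβ hint (by positivity) ?_)
  · rw [sum_neg_distrib]
    linarith
  · rw [inv_div]
    linarith

end PsiTails

theorem linear_estimate_reliability_general {Ω : Type*} [MeasurableSpace Ω] (P : Measure Ω)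
    [SigmaFinite P] {m n : ℕ} {ι : Type*} [Fintype ι] [Nonempty ι]
    (p : (Fin m → ℝ) → Ω → ℝ)
    (X : ι → Set (Fin n → ℝ)) (hXne : ∀ j, (X j).Nonempty)
    (A : ι → (Fin n → ℝ) →ᵃ[ℝ] (Fin m → ℝ))
    (hp0 : ∀ j, ∀ x ∈ X j, ∀ ω, 0 ≤ p (A j x) ω)
    (hp1 : ∀ j, ∀ x ∈ X j, ∫ ω, p (A j x) ω ∂P = 1)
    (g : Fin n → ℝ) (ε : ℝ) (hε : 0 < ε) (hε1 : ε < 1)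
    (K : ℕ)
    (α : ι → ι → ℝ) (hα : ∀ i j, 0 < α i j)
    (φ : ι → ι → Ω → ℝ)
    -- finiteness of the quantities `Ψ_{i,+}(α_{ij},φ_{ij})`, `Ψ_{j,−}(α_{ij},φ_{ij})`:
    (hInt1 : ∀ i j, ∀ x ∈ X i,
      Integrable (fun ω => Real.exp (φ i j ω / α i j) * p (A i x) ω) P)
    (hInt2 : ∀ i j, ∀ x ∈ X j,
      Integrable (fun ω => Real.exp (-(φ i j ω) / α i j) * p (A j x) ω) P)
    (hBdd1 : ∀ i j, BddAbove (PsiPlusSet P p X A g ε K i (α i j) (φ i j)))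
    (hBdd2 : ∀ i j, BddAbove (PsiMinusSet P p X A g ε K j (α i j) (φ i j)))
    (ρ : ι → ι → ℝ)
    (hρ : ∀ i j, ρ i j = PsiPlus P p X A g ε K i (α i j) (φ i j) / 2 +
      PsiMinus P p X A g ε K j (α i j) (φ i j) / 2)
    (κ : ι → ι → ℝ)
    (hκ : ∀ i j, κ i j = PsiMinus P p X A g ε K j (α i j) (φ i j) / 2 -
      PsiPlus P p X A g ε K i (α i j) (φ i j) / 2)
    (gest : ι → ι → (Fin K → Ω) → ℝ)
    (hgest : ∀ i j y, gest i j y = (∑ k, φ i j (y k)) + κ i j)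
    (ghat : (Fin K → Ω) → ℝ)
    (hghat : ∀ y, ghat y = (1 / 2) *
      ((Finset.univ.inf' Finset.univ_nonempty fun i =>
          Finset.univ.sup' Finset.univ_nonempty fun j => gest i j y) +
       (Finset.univ.sup' Finset.univ_nonempty fun j =>
          Finset.univ.inf' Finset.univ_nonempty fun i => gest i j y)))
    (ρl : ι → ℝ)
    (hρl : ∀ ℓ, ρl ℓ = Finset.univ.sup' Finset.univ_nonempty fun j =>
      max (ρ ℓ j) (ρ j ℓ))
    (ρtot : ℝ)
    (hρtot : ρtot = Finset.univ.sup' Finset.univ_nonempty fun q : ι × ι => ρ q.1 q.2) :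
    (∀ ℓ : ι, ∀ x ∈ X ℓ,
      prodDensityMeasure P K (p (A ℓ x))
        {y | ρl ℓ < |ghat y - ∑ i, g i * x i|} ≤ ENNReal.ofReal ε) ∧
    sInf {ρ' : ℝ | ∀ j : ι, ∀ x ∈ X j,
        prodDensityMeasure P K (p (A j x))
          {y | ρ' < |ghat y - ∑ i, g i * x i|} ≤ ENNReal.ofReal ε} ≤ ρtot := by
  have hρl_ge : ∀ ℓ j, max (ρ ℓ j) (ρ j ℓ) ≤ ρl ℓ := fun ℓ j =>
    (hρl ℓ).ge.trans' (le_sup' (fun j => max (ρ ℓ j) (ρ j ℓ)) (mem_univ j))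
  have hreliable : ∀ ℓ, ∀ x ∈ X ℓ, prodDensityMeasure P K (p (A ℓ x))
      {y | ρl ℓ < |ghat y - ∑ i, g i * x i|} ≤ ENNReal.ofReal ε := by
    intro ℓ x hx
    rw [show ghat = fun y => (1 / 2) * (minMax (fun i j => gest i j y)
      + maxMin (fun i j => gest i j y)) from funext hghat]
    refine (measure_abs_midpoint_minMax_maxMin_sub_gt_le _ gest ℓ
      (fun j => (le_max_left _ _).trans (hρl_ge ℓ j))
      (fun i => (le_max_right _ _).trans (hρl_ge ℓ i)) (fun j => ?_) (fun i => ?_))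
      |>.trans_eq (natCast_card_mul_two_mul_ofReal_div ι ε)
    · refine (measure_mono (Set.ofPred_subset_ofPred.mpr fun y hy => ?_)).trans
        (prodDensityMeasure_add_psiPlus_lt_sum_le P p X A g K hx (hp0 ℓ x hx) hε (hα ℓ j)
          (hInt1 ℓ j x hx) (hBdd1 ℓ j))
      rw [hgest] at hy
      linarith [hρ ℓ j, hκ ℓ j]
    · refine (measure_mono (Set.ofPred_subset_ofPred.mpr fun y hy => ?_)).trans
        (prodDensityMeasure_sum_lt_sub_psiMinus_le P p X A g K hx (hp0 ℓ x hx) hε (hα i ℓ)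
          (hInt2 i ℓ x hx) (hBdd2 i ℓ))
      rw [hgest] at hy
      linarith [hρ i ℓ, hκ i ℓ]
  refine ⟨hreliable, csInf_le ⟨0, fun r hr => ?_⟩ fun j x hx => ?_⟩
  · obtain ⟨j⟩ := ‹Nonempty ι›
    obtain ⟨x, hx⟩ := hXne j
    have := isProbabilityMeasure_prodDensityMeasure P K (hp0 j x hx) (hp1 j x hx)
    exact nonneg_of_measure_lt_le (fun _ => abs_nonneg _) hε1 (hr j x hx)
  · have hρl_le : ρl j ≤ ρtot := by
      rw [hρl, hρtot]
      exact sup'_le _ _ fun k _ => max_le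
        (le_sup' (fun q : ι × ι => ρ q.1 q.2) (mem_univ (j, k)))
        (le_sup' (fun q : ι × ι => ρ q.1 q.2) (mem_univ (k, j)))
    exact (measure_mono (Set.ofPred_subset_ofPred.mpr fun y hy => hρl_le.trans_lt hy)).trans
      (hreliable j x hx)

/-- **Proposition 1.** For the linear-form recovery problem, given feasible
solutions `(α i j, φ i j)` with finite `Ψ` values, the estimate
`ĝ(ω^K) = ½[min_i max_j g_{ij}(ω^K) + max_j min_i g_{ij}(ω^K)]` built from
`g_{ij}(ω^K) = Σ_k φ_{ij}(ω_k) + κ_{ij}` satisfies: for every `ℓ` and `x ∈ X_ℓ`, the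
`p^K_{A_ℓ(x)}`-probability that `|ĝ(ω^K) − gᵀx| > ρ_ℓ` is at most `ε`; consequently
`Risk_ε[ĝ] ≤ ρ = max_{i,j} ρ_{ij}`. -/
theorem linear_estimate_reliability {Ω : Type*} [MeasurableSpace Ω] (P : Measure Ω)
    [SigmaFinite P] {m n : ℕ} {ι : Type*} [Fintype ι] [Nonempty ι]
    (p : (Fin m → ℝ) → Ω → ℝ)
    (X : ι → Set (Fin n → ℝ)) (hXne : ∀ j, (X j).Nonempty)
    (hXconv : ∀ j, Convex ℝ (X j)) (hXcomp : ∀ j, IsCompact (X j))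
    (A : ι → (Fin n → ℝ) →ᵃ[ℝ] (Fin m → ℝ))
    (hpm : ∀ j, ∀ x ∈ X j, Measurable (p (A j x)))
    (hp0 : ∀ j, ∀ x ∈ X j, ∀ ω, 0 ≤ p (A j x) ω)
    (hp1 : ∀ j, ∀ x ∈ X j, ∫ ω, p (A j x) ω ∂P = 1)
    (g : Fin n → ℝ) (ε : ℝ) (hε : 0 < ε) (hε1 : ε < 1)
    (K : ℕ) (hK : 0 < K)
    (α : ι → ι → ℝ) (hα : ∀ i j, 0 < α i j)
    (φ : ι → ι → Ω → ℝ) (hφ : ∀ i j, Measurable (φ i j))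
    -- finiteness of the quantities `Ψ_{i,+}(α_{ij},φ_{ij})`, `Ψ_{j,−}(α_{ij},φ_{ij})`:
    (hInt1 : ∀ i j, ∀ x ∈ X i,
      Integrable (fun ω => Real.exp (φ i j ω / α i j) * p (A i x) ω) P)
    (hInt2 : ∀ i j, ∀ x ∈ X j,
      Integrable (fun ω => Real.exp (-(φ i j ω) / α i j) * p (A j x) ω) P)
    (hBdd1 : ∀ i j, BddAbove (PsiPlusSet P p X A g ε K i (α i j) (φ i j)))
    (hBdd2 : ∀ i j, BddAbove (PsiMinusSet P p X A g ε K j (α i j) (φ i j)))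
    (ρ : ι → ι → ℝ)
    (hρ : ∀ i j, ρ i j = PsiPlus P p X A g ε K i (α i j) (φ i j) / 2 +
      PsiMinus P p X A g ε K j (α i j) (φ i j) / 2)
    (κ : ι → ι → ℝ)
    (hκ : ∀ i j, κ i j = PsiMinus P p X A g ε K j (α i j) (φ i j) / 2 -
      PsiPlus P p X A g ε K i (α i j) (φ i j) / 2)
    (gest : ι → ι → (Fin K → Ω) → ℝ)
    (hgest : ∀ i j y, gest i j y = (∑ k, φ i j (y k)) + κ i j)
    (ghat : (Fin K → Ω) → ℝ)
    (hghat : ∀ y, ghat y = (1 / 2) *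
      ((Finset.univ.inf' Finset.univ_nonempty fun i =>
          Finset.univ.sup' Finset.univ_nonempty fun j => gest i j y) +
       (Finset.univ.sup' Finset.univ_nonempty fun j =>
          Finset.univ.inf' Finset.univ_nonempty fun i => gest i j y)))
    (ρl : ι → ℝ)
    (hρl : ∀ ℓ, ρl ℓ = Finset.univ.sup' Finset.univ_nonempty fun j =>
      max (ρ ℓ j) (ρ j ℓ))
    (ρtot : ℝ)
    (hρtot : ρtot = Finset.univ.sup' Finset.univ_nonempty fun q : ι × ι => ρ q.1 q.2) :
    (∀ ℓ : ι, ∀ x ∈ X ℓ,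
      prodDensityMeasure P K (p (A ℓ x))
        {y | ρl ℓ < |ghat y - ∑ i, g i * x i|} ≤ ENNReal.ofReal ε) ∧
    sInf {ρ' : ℝ | ∀ j : ι, ∀ x ∈ X j,
        prodDensityMeasure P K (p (A j x))
          {y | ρ' < |ghat y - ∑ i, g i * x i|} ≤ ENNReal.ofReal ε} ≤ ρtot :=
  linear_estimate_reliability_general P p X hXne A hp0 hp1 g ε hε hε1 K α hα φ hInt1 hInt2 hBdd1
    hBdd2 ρ hρ κ hκ gest hgest ghat hghat ρl hρl ρtot hρtot
end

section
/- Let (Ω,P) be a measure space with σ-finite measure P, and let p, q be probability densities w.r.t. P that are positive P-almost everywhere. Then for every measurable ψ : Ω → ℝ for which both integrals are finite, ln(∫_Ω e^{ψ(ω)} p(ω) P(dω)) + ln(∫_Ω e^{−ψ(ω)} q(ω) P(dω)) ≥ 2 ln(∫_Ω √(p(ω) q(ω)) P(dω)), and equality holds for ψ = ½ ln(q/p). Consequently, the infimum of the left-hand side over any family of measurable functions containing ½ ln(q/p) equals 2 ln(∫_Ω √(p q) dP). -/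
/-!
By Cauchy–Schwarz applied to `√(e^ψ p)` and `√(e^{-ψ} q)`, whose product is `√(p q)`,
`(∫ √(p q))² ≤ (∫ e^ψ p) (∫ e^{-ψ} q)`; taking logarithms gives the inequality. At
`ψ = ½ ln(q/p)` both factors `e^ψ p` and `e^{-ψ} q` equal `√(p q)`, so Cauchy–Schwarz is
an equality there, and the infimum is attained.
-/

open MeasureTheory Real

lemma Real.exp_half_mul_log {x : ℝ} (hx : 0 < x) : exp (1 / 2 * log x) = √x := by
  rw [sqrt_eq_rpow, rpow_def_of_pos hx, mul_comm]

lemma Real.sqrt_div_mul_self {a : ℝ} (ha : 0 ≤ a) (b : ℝ) : √(b / a) * a = √(a * b) := by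
  rcases ha.eq_or_lt with rfl | ha
  · simp
  rw [← sqrt_sq ha.le, ← sqrt_mul' _ (sq_nonneg a), sqrt_sq ha.le]
  congr 1
  field_simp

lemma Real.sqrt_mul_le_abs_add_abs_div_two (a b : ℝ) : √(a * b) ≤ (|a| + |b|) / 2 := by
  rw [← sqrt_sq (by positivity : 0 ≤ (|a| + |b|) / 2)]
  refine sqrt_le_sqrt ?_
  nlinarith [le_abs_self (a * b), abs_mul a b, sq_nonneg (|a| - |b|)]

lemma Real.two_mul_log_le_log_add_log {c a b : ℝ} (hc : c ≠ 0) (h : c ^ 2 ≤ a * b) :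
    2 * log c ≤ log a + log b := by
  have hab : a * b ≠ 0 := (lt_of_lt_of_le (by positivity) h).ne'
  calc 2 * log c = log (c ^ 2) := by rw [log_pow]; norm_num
    _ ≤ log (a * b) := log_le_log (by positivity) h
    _ = log a + log b := log_mul (left_ne_zero_of_mul hab) (right_ne_zero_of_mul hab)

lemma Real.exp_half_mul_log_div_mul {a b : ℝ} (ha : 0 < a) (hb : 0 < b) :
    exp (1 / 2 * log (b / a)) * a = √(a * b) := by
  rw [exp_half_mul_log (div_pos hb ha), sqrt_div_mul_self ha.le]

lemma Real.exp_neg_half_mul_log_div_mul {a b : ℝ} (ha : 0 < a) (hb : 0 < b) :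
    exp (-(1 / 2 * log (b / a))) * b = √(a * b) := by
  have hneg : -(1 / 2 * log (b / a)) = 1 / 2 * log (a / b) := by
    rw [log_div hb.ne' ha.ne', log_div ha.ne' hb.ne']
    ring
  rw [hneg, exp_half_mul_log (div_pos ha hb), sqrt_div_mul_self hb.le, mul_comm]

namespace MeasureTheory

variable {Ω : Type*} [MeasurableSpace Ω] {μ : Measure Ω} {f g : Ω → ℝ}

lemma integral_pos_of_ae_pos (hμ : μ ≠ 0) (hf : ∀ᵐ x ∂μ, 0 < f x) (hfi : Integrable f μ) :
    0 < ∫ x, f x ∂μ := by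
  rw [integral_pos_iff_support_of_nonneg_ae (hf.mono fun _ h => h.le) hfi]
  have hsupp : Function.support f =ᵐ[μ] (Set.univ : Set Ω) :=
    ae_eq_univ.mpr (ae_iff.mp (hf.mono fun _ h => h.ne'))
  rw [measure_congr hsupp]
  exact Measure.measure_univ_pos.mpr hμ

lemma Integrable.sqrt_mul (hf : Integrable f μ) (hg : Integrable g μ) :
    Integrable (fun x => √(f x * g x)) μ := by
  refine Integrable.mono' ((hf.abs.add hg.abs).div_const 2)
    (continuous_sqrt.comp_aestronglyMeasurable
      (hf.aestronglyMeasurable.mul hg.aestronglyMeasurable)) ?_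
  refine .of_forall fun x => ?_
  rw [norm_of_nonneg (sqrt_nonneg _)]
  exact sqrt_mul_le_abs_add_abs_div_two _ _

theorem sq_integral_sqrt_mul_le (hf0 : 0 ≤ᵐ[μ] f) (hg0 : 0 ≤ᵐ[μ] g)
    (hf : Integrable f μ) (hg : Integrable g μ) :
    (∫ x, √(f x * g x) ∂μ) ^ 2 ≤ (∫ x, f x ∂μ) * ∫ x, g x ∂μ := by
  have memLp_sqrt : ∀ {h : Ω → ℝ}, 0 ≤ᵐ[μ] h → Integrable h μ →
      MemLp (fun x => √(h x)) (ENNReal.ofReal 2) μ := fun {h} h0 hi => by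
    rw [ENNReal.ofReal_ofNat, memLp_two_iff_integrable_sq
      (continuous_sqrt.comp_aestronglyMeasurable hi.aestronglyMeasurable)]
    exact hi.congr (h0.mono fun x hx => (sq_sqrt hx).symm)
  have integral_sqrt_rpow_two : ∀ {h : Ω → ℝ}, 0 ≤ᵐ[μ] h →
      (∫ x, √(h x) ^ (2 : ℝ) ∂μ) ^ (1 / (2 : ℝ)) = √(∫ x, h x ∂μ) := fun {h} h0 => by
    rw [← sqrt_eq_rpow]
    congr 1
    exact integral_congr_ae (h0.mono fun x hx => by simp only [rpow_two, sq_sqrt hx])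
  have hCS := integral_mul_le_Lp_mul_Lq_of_nonneg HolderConjugate.two_two
    (.of_forall fun x => sqrt_nonneg (f x)) (.of_forall fun x => sqrt_nonneg (g x))
    (memLp_sqrt hf0 hf) (memLp_sqrt hg0 hg)
  rw [integral_sqrt_rpow_two hf0, integral_sqrt_rpow_two hg0] at hCS
  have hsqrt : ∫ x, √(f x * g x) ∂μ = ∫ x, √(f x) * √(g x) ∂μ :=
    integral_congr_ae (hf0.mono fun x hx => sqrt_mul hx _)
  calc (∫ x, √(f x * g x) ∂μ) ^ 2 ≤ (√(∫ x, f x ∂μ) * √(∫ x, g x ∂μ)) ^ 2 := by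
        rw [hsqrt]
        exact pow_le_pow_left₀ (integral_nonneg fun x => by positivity) hCS 2
    _ = (∫ x, f x ∂μ) * ∫ x, g x ∂μ := by
        rw [mul_pow, sq_sqrt (integral_nonneg_of_ae hf0), sq_sqrt (integral_nonneg_of_ae hg0)]

theorem two_mul_log_integral_sqrt_mul_le (hμ : μ ≠ 0) (hf0 : ∀ᵐ x ∂μ, 0 < f x)
    (hg0 : ∀ᵐ x ∂μ, 0 < g x) (hf : Integrable f μ) (hg : Integrable g μ) :
    2 * log (∫ x, √(f x * g x) ∂μ) ≤ log (∫ x, f x ∂μ) + log (∫ x, g x ∂μ) := by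
  refine two_mul_log_le_log_add_log (integral_pos_of_ae_pos hμ ?_ (hf.sqrt_mul hg)).ne'
    (sq_integral_sqrt_mul_le (hf0.mono fun _ h => h.le) (hg0.mono fun _ h => h.le) hf hg)
  filter_upwards [hf0, hg0] with x hfx hgx
  positivity

end MeasureTheory

theorem log_mgf_sum_ge_two_log_hellinger_general {Ω : Type*} [MeasurableSpace Ω] (P : Measure Ω)
    (p q : Ω → ℝ)
    (hp0 : ∀ᵐ ω ∂P, 0 < p ω) (hq0 : ∀ᵐ ω ∂P, 0 < q ω)
    (hp1 : ∫ ω, p ω ∂P = 1) :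
    (∀ ψ : Ω → ℝ, Measurable ψ →
        Integrable (fun ω => Real.exp (ψ ω) * p ω) P →
        Integrable (fun ω => Real.exp (-ψ ω) * q ω) P →
        2 * Real.log (∫ ω, Real.sqrt (p ω * q ω) ∂P) ≤
          Real.log (∫ ω, Real.exp (ψ ω) * p ω ∂P) +
            Real.log (∫ ω, Real.exp (-ψ ω) * q ω ∂P)) ∧
    (Real.log (∫ ω, Real.exp ((1 / 2) * Real.log (q ω / p ω)) * p ω ∂P) +
        Real.log (∫ ω, Real.exp (-((1 / 2) * Real.log (q ω / p ω))) * q ω ∂P) =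
      2 * Real.log (∫ ω, Real.sqrt (p ω * q ω) ∂P)) ∧
    (∀ F : Set (Ω → ℝ),
        (∀ ψ ∈ F, Measurable ψ ∧
            Integrable (fun ω => Real.exp (ψ ω) * p ω) P ∧
            Integrable (fun ω => Real.exp (-ψ ω) * q ω) P) →
        (fun ω => (1 / 2) * Real.log (q ω / p ω)) ∈ F →
        sInf {v | ∃ ψ ∈ F,
            v = Real.log (∫ ω, Real.exp (ψ ω) * p ω ∂P) +
                Real.log (∫ ω, Real.exp (-ψ ω) * q ω ∂P)} =
          2 * Real.log (∫ ω, Real.sqrt (p ω * q ω) ∂P)) := by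
  have hP : P ≠ 0 := by
    rintro rfl
    simp at hp1
  have hle : ∀ ψ : Ω → ℝ, Integrable (fun ω => exp (ψ ω) * p ω) P →
      Integrable (fun ω => exp (-ψ ω) * q ω) P →
      2 * log (∫ ω, √(p ω * q ω) ∂P) ≤
        log (∫ ω, exp (ψ ω) * p ω ∂P) + log (∫ ω, exp (-ψ ω) * q ω ∂P) := by
    intro ψ hA hB
    have hpq : ∀ ω, exp (ψ ω) * p ω * (exp (-ψ ω) * q ω) = p ω * q ω := fun ω => by
      rw [exp_neg]
      field_simp
    simpa only [hpq] using two_mul_log_integral_sqrt_mul_le hP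
      (hp0.mono fun _ h => by positivity) (hq0.mono fun _ h => by positivity) hA hB
  have heq : log (∫ ω, exp (1 / 2 * log (q ω / p ω)) * p ω ∂P) +
      log (∫ ω, exp (-(1 / 2 * log (q ω / p ω))) * q ω ∂P) =
      2 * log (∫ ω, √(p ω * q ω) ∂P) := by
    have hA : ∫ ω, exp (1 / 2 * log (q ω / p ω)) * p ω ∂P = ∫ ω, √(p ω * q ω) ∂P :=
      integral_congr_ae (by filter_upwards [hp0, hq0] with ω hp hq
                            exact exp_half_mul_log_div_mul hp hq)
    have hB : ∫ ω, exp (-(1 / 2 * log (q ω / p ω))) * q ω ∂P = ∫ ω, √(p ω * q ω) ∂P :=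
      integral_congr_ae (by filter_upwards [hp0, hq0] with ω hp hq
                            exact exp_neg_half_mul_log_div_mul hp hq)
    rw [hA, hB]
    ring
  refine ⟨fun ψ _ => hle ψ, heq, fun F hF hmem => IsLeast.csInf_eq ⟨⟨_, hmem, heq.symm⟩, ?_⟩⟩
  rintro _ ⟨ψ, hψ, rfl⟩
  exact hle ψ (hF ψ hψ).2.1 (hF ψ hψ).2.2

/-- For probability densities `p`, `q` (positive `P`-a.e.) w.r.t. a
σ-finite measure `P` and any measurable `ψ` with finite associated integrals,
`ln ∫ e^ψ p dP + ln ∫ e^{-ψ} q dP ≥ 2 ln ∫ √(p q) dP`, with equality at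
`ψ = ½ ln(q/p)`; consequently the infimum of the left-hand side over any family of
measurable functions (with finite integrals) containing `½ ln(q/p)` equals
`2 ln ∫ √(p q) dP`. -/
theorem log_mgf_sum_ge_two_log_hellinger {Ω : Type*} [MeasurableSpace Ω] (P : Measure Ω)
    [SigmaFinite P]
    (p q : Ω → ℝ) (hpm : Measurable p) (hqm : Measurable q)
    (hp0 : ∀ᵐ ω ∂P, 0 < p ω) (hq0 : ∀ᵐ ω ∂P, 0 < q ω)
    (hp1 : ∫ ω, p ω ∂P = 1) (hq1 : ∫ ω, q ω ∂P = 1) :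
    (∀ ψ : Ω → ℝ, Measurable ψ →
        Integrable (fun ω => Real.exp (ψ ω) * p ω) P →
        Integrable (fun ω => Real.exp (-ψ ω) * q ω) P →
        2 * Real.log (∫ ω, Real.sqrt (p ω * q ω) ∂P) ≤
          Real.log (∫ ω, Real.exp (ψ ω) * p ω ∂P) +
            Real.log (∫ ω, Real.exp (-ψ ω) * q ω ∂P)) ∧
    (Real.log (∫ ω, Real.exp ((1 / 2) * Real.log (q ω / p ω)) * p ω ∂P) +
        Real.log (∫ ω, Real.exp (-((1 / 2) * Real.log (q ω / p ω))) * q ω ∂P) =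
      2 * Real.log (∫ ω, Real.sqrt (p ω * q ω) ∂P)) ∧
    (∀ F : Set (Ω → ℝ),
        (∀ ψ ∈ F, Measurable ψ ∧
            Integrable (fun ω => Real.exp (ψ ω) * p ω) P ∧
            Integrable (fun ω => Real.exp (-ψ ω) * q ω) P) →
        (fun ω => (1 / 2) * Real.log (q ω / p ω)) ∈ F →
        sInf {v | ∃ ψ ∈ F,
            v = Real.log (∫ ω, Real.exp (ψ ω) * p ω ∂P) +
                Real.log (∫ ω, Real.exp (-ψ ω) * q ω ∂P)} =
          2 * Real.log (∫ ω, Real.sqrt (p ω * q ω) ∂P)) :=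
  log_mgf_sum_ge_two_log_hellinger_general P p q hp0 hq0 hp1
end

section
/- Let (Ω,P) be a measure space with σ-finite measure P and let p, q be probability densities w.r.t. P. Setting a = ∫_Ω min[p(ω), q(ω)] P(dω), one has ∫_Ω √(p(ω) q(ω)) P(dω) ≤ √(a (2 − a)). -/
/-!
Writing `p q = min(p,q) · max(p,q)`, Cauchy–Schwarz bounds `∫ √(p q)` by
`√(∫ min(p,q) · ∫ max(p,q))`, and `∫ max(p,q) = ∫ p + ∫ q - ∫ min(p,q) = 2 - a`.
-/

open MeasureTheory

section

variable {α : Type*} [MeasurableSpace α] {μ : Measure α} {f g : α → ℝ}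

theorem MeasureTheory.Integrable.memLp_two_sqrt (hf : Integrable f μ) (hf0 : 0 ≤ᵐ[μ] f) :
    MemLp (fun x ↦ √(f x)) 2 μ := by
  refine (memLp_two_iff_integrable_sq
    (Real.continuous_sqrt.comp_aestronglyMeasurable hf.aestronglyMeasurable)).2 ?_
  refine hf.congr ?_
  filter_upwards [hf0] with x hx
  exact (Real.sq_sqrt hx).symm

theorem integral_sqrt_mul_le_sqrt_mul_integral (hf : Integrable f μ) (hg : Integrable g μ)
    (hf0 : 0 ≤ᵐ[μ] f) (hg0 : 0 ≤ᵐ[μ] g) :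
    ∫ x, √(f x * g x) ∂μ ≤ √((∫ x, f x ∂μ) * ∫ x, g x ∂μ) := by
  have hsq (h : α → ℝ) (h0 : 0 ≤ᵐ[μ] h) : ∫ x, √(h x) ^ (2 : ℝ) ∂μ = ∫ x, h x ∂μ := by
    refine integral_congr_ae ?_
    filter_upwards [h0] with x hx
    rw [Real.rpow_two, Real.sq_sqrt hx]
  calc ∫ x, √(f x * g x) ∂μ = ∫ x, √(f x) * √(g x) ∂μ := by
        refine integral_congr_ae ?_
        filter_upwards [hf0] with x hx
        exact Real.sqrt_mul hx _
    _ ≤ (∫ x, √(f x) ^ (2 : ℝ) ∂μ) ^ (1 / (2 : ℝ)) * (∫ x, √(g x) ^ (2 : ℝ) ∂μ) ^ (1 / (2 : ℝ)) :=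
        integral_mul_le_Lp_mul_Lq_of_nonneg Real.HolderConjugate.two_two
          (.of_forall fun x ↦ Real.sqrt_nonneg (f x)) (.of_forall fun x ↦ Real.sqrt_nonneg (g x))
          (by simpa using hf.memLp_two_sqrt hf0) (by simpa using hg.memLp_two_sqrt hg0)
    _ = √((∫ x, f x ∂μ) * ∫ x, g x ∂μ) := by
        rw [hsq f hf0, hsq g hg0, ← Real.sqrt_eq_rpow, ← Real.sqrt_eq_rpow,
          Real.sqrt_mul' _ (integral_nonneg_of_ae hg0)]

theorem integral_max_eq_sub_integral_min (hf : Integrable f μ) (hg : Integrable g μ) :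
    ∫ x, max (f x) (g x) ∂μ = ∫ x, f x ∂μ + ∫ x, g x ∂μ - ∫ x, min (f x) (g x) ∂μ := by
  have hmax : Integrable (fun x ↦ max (f x) (g x)) μ := hf.sup hg
  have hmin : Integrable (fun x ↦ min (f x) (g x)) μ := hf.inf hg
  rw [eq_sub_iff_add_eq, ← integral_add hmax hmin, ← integral_add hf hg]
  simp_rw [add_comm (max _ _), min_add_max]

end

theorem hellinger_affinity_le_sqrt_general {Ω : Type*} [MeasurableSpace Ω] (P : Measure Ω)
    (p q : Ω → ℝ)
    (hp0 : ∀ ω, 0 ≤ p ω) (hq0 : ∀ ω, 0 ≤ q ω)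
    (hp1 : ∫ ω, p ω ∂P = 1) (hq1 : ∫ ω, q ω ∂P = 1)
    (a : ℝ) (ha : a = ∫ ω, min (p ω) (q ω) ∂P) :
    ∫ ω, Real.sqrt (p ω * q ω) ∂P ≤ Real.sqrt (a * (2 - a)) := by
  have hp : Integrable p P := .of_integral_ne_zero (by simp [hp1])
  have hq : Integrable q P := .of_integral_ne_zero (by simp [hq1])
  calc ∫ ω, √(p ω * q ω) ∂P = ∫ ω, √(min (p ω) (q ω) * max (p ω) (q ω)) ∂P := by
        simp_rw [min_mul_max]
    _ ≤ √((∫ ω, min (p ω) (q ω) ∂P) * ∫ ω, max (p ω) (q ω) ∂P) :=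
        integral_sqrt_mul_le_sqrt_mul_integral (hp.inf hq) (hp.sup hq)
          (.of_forall fun ω ↦ le_min (hp0 ω) (hq0 ω))
          (.of_forall fun ω ↦ le_max_of_le_left (hp0 ω))
    _ = √(a * (2 - a)) := by
        rw [integral_max_eq_sub_integral_min hp hq, hp1, hq1, ← ha]
        ring_nf

/-- For probability densities `p`, `q` w.r.t. a σ-finite measure `P`,
writing `a = ∫ min(p,q) dP`, one has `∫ √(p q) dP ≤ √(a (2 - a))`. -/
theorem hellinger_affinity_le_sqrt {Ω : Type*} [MeasurableSpace Ω] (P : Measure Ω)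
    [SigmaFinite P]
    (p q : Ω → ℝ) (hpm : Measurable p) (hqm : Measurable q)
    (hp0 : ∀ ω, 0 ≤ p ω) (hq0 : ∀ ω, 0 ≤ q ω)
    (hp1 : ∫ ω, p ω ∂P = 1) (hq1 : ∫ ω, q ω ∂P = 1)
    (a : ℝ) (ha : a = ∫ ω, min (p ω) (q ω) ∂P) :
    ∫ ω, Real.sqrt (p ω * q ω) ∂P ≤ Real.sqrt (a * (2 - a)) :=
  hellinger_affinity_le_sqrt_general P p q hp0 hq0 hp1 hq1 a ha
end

section
/- Let (Ω,P) be a measure space with σ-finite measure P and {p_μ : μ ∈ M} probability densities w.r.t. P. Let B_1,…,B_b and R_1,…,R_r be nonempty subsets of M, K a positive integer, and suppose given measurable detectors φ_{ij} : Ω → ℝ and reals ε_{ij} ∈ (0,1), 1 ≤ i ≤ b, 1 ≤ j ≤ r, such that ∫_Ω e^{−φ_{ij}(ω)} p_μ(ω) P(dω) ≤ ε_{ij} for all μ ∈ B_i and ∫_Ω e^{φ_{ij}(ω)} p_ν(ω) P(dω) ≤ ε_{ij} for all ν ∈ R_j. Let E^{(K)} = [ε_{ij}^K] be the (entrywise positive)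 b×r matrix, let ε_K be its spectral norm, and let e = [g;h] > 0 be a Perron–Frobenius eigenvector of the symmetric matrix [[0, E^{(K)}],[(E^{(K)})^T, 0]], so that E^{(K)} h = ε_K g and (E^{(K)})^T g = ε_K h. Define ψ_{ij}(ω^K) = Σ_{t=1}^K φ_{ij}(ω_t) − ln(h_j/g_i), and let the test claim 'blue' on observation ω^K if there exists i ≤ b with ψ_{ij}(ω^K) ≥ 0 for all j ≤ r, and claim 'red' otherwise. Then for ω_1,…,ω_K drawn i.i.d. from p_μ: if μ ∈ B_1 ∪ … ∪ B_b the test claims 'blue' with probability at least 1 − ε_K, and if μ ∈ R_1 ∪ … ∪ R_r the test claims 'red' with probability at least 1 − ε_K. -/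
open MeasureTheory

/-!
Fix a blue pair index `i` with `μ ∈ B i`. If the test errs, some `ψ i j` is negative, i.e. the
sum of the `K` values of `-φ i j` exceeds `log (g i / h j)`. By the exponential Markov inequality
and independence this has probability at most `(h j / g i) ε i j ^ K`, and a union bound over `j`
gives `(E h)_i / g i = εK`. The red case is the same argument for `Eᵀ g = εK h`.
-/

open ENNReal Finset

theorem MeasureTheory.lintegral_fin_prod_eq_prod {α : Type*} [MeasurableSpace α] {n : ℕ}
    {μ : Fin n → Measure α} [∀ i, SigmaFinite (μ i)] {f : Fin n → α → ℝ≥0∞}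
    (hf : ∀ i, Measurable (f i)) :
    ∫⁻ x, ∏ i, f i (x i) ∂Measure.pi μ = ∏ i, ∫⁻ x, f i x ∂μ i := by
  induction n with
  | zero => simp
  | succ n ih =>
    have hmeas : Measurable fun x : Fin n → α => ∏ i, f i.succ (x i) := by fun_prop
    calc ∫⁻ x, ∏ i, f i (x i) ∂Measure.pi μ
        = ∫⁻ x : α × (Fin n → α), f 0 x.1 * ∏ i, f i.succ (x.2 i)
            ∂(μ 0).prod (Measure.pi fun i => μ i.succ) := by
          rw [← (measurePreserving_piFinSuccAbove μ 0).symm.lintegral_comp_emb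
            (MeasurableEquiv.measurableEmbedding _)]
          simp_rw [MeasurableEquiv.piFinSuccAbove_symm_apply, Fin.insertNthEquiv,
            Fin.prod_univ_succ, Fin.insertNth_zero, Equiv.coe_fn_mk, Fin.cons_succ,
            Fin.zero_succAbove, cast_eq, Fin.cons_zero]
      _ = ∏ i, ∫⁻ x, f i x ∂μ i := by
          rw [lintegral_prod_mul (hf 0).aemeasurable hmeas.aemeasurable, ih fun i => hf i.succ,
            Fin.prod_univ_succ]

section IIDObservations

variable {Ω : Type*} [MeasurableSpace Ω] {P : Measure Ω} [SigmaFinite P] {K : ℕ} {p : Ω → ℝ}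

theorem lintegral_prodDensityMeasure_prod (hpm : Measurable p) (hp0 : ∀ ω, 0 ≤ p ω)
    {g : Ω → ℝ≥0∞} (hg : Measurable g) :
    ∫⁻ y, ∏ t, g (y t) ∂prodDensityMeasure P K p = (∫⁻ ω, ENNReal.ofReal (p ω) * g ω ∂P) ^ K := by
  have hdens : Measurable fun y : Fin K → Ω => ENNReal.ofReal (∏ t, p (y t)) :=
    (Finset.measurable_prod _ fun t _ => hpm.comp (measurable_pi_apply t)).ennreal_ofReal
  have hgprod : Measurable fun y : Fin K → Ω => ∏ t, g (y t) := by fun_prop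
  rw [prodDensityMeasure, lintegral_withDensity_eq_lintegral_mul _ hdens hgprod]
  simp_rw [Pi.mul_apply, ofReal_prod_of_nonneg fun t _ => hp0 _, ← Finset.prod_mul_distrib]
  rw [lintegral_fin_prod_eq_prod (f := fun _ ω => ENNReal.ofReal (p ω) * g ω)
    fun _ => hpm.ennreal_ofReal.mul hg, prod_const, card_univ, Fintype.card_fin]

theorem prodDensityMeasure_le_sum_le_exp_mul_pow (hpm : Measurable p) (hp0 : ∀ ω, 0 ≤ p ω)
    {θ : Ω → ℝ} (hθ : Measurable θ) (a : ℝ) :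
    prodDensityMeasure P K p {y | a ≤ ∑ t, θ (y t)} ≤
      ENNReal.ofReal (Real.exp (-a)) *
        (∫⁻ ω, ENNReal.ofReal (Real.exp (θ ω) * p ω) ∂P) ^ K := by
  set g : Ω → ℝ≥0∞ := fun ω => ENNReal.ofReal (Real.exp (θ ω))
  have hset : {y : Fin K → Ω | a ≤ ∑ t, θ (y t)} =
      {y | ENNReal.ofReal (Real.exp a) ≤ ∏ t, g (y t)} := by
    ext y
    simp only [Set.mem_ofPred_eq, g, ← ofReal_prod_of_nonneg fun t _ => (Real.exp_pos _).le,
      ← Real.exp_sum, ENNReal.ofReal_le_ofReal_iff (Real.exp_pos _).le, Real.exp_le_exp]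
  have hgprod : Measurable fun y : Fin K → Ω => ∏ t, g (y t) := by fun_prop
  calc prodDensityMeasure P K p {y | a ≤ ∑ t, θ (y t)}
      ≤ (∫⁻ y, ∏ t, g (y t) ∂prodDensityMeasure P K p) / ENNReal.ofReal (Real.exp a) := by
        rw [hset]
        exact meas_ge_le_lintegral_div hgprod.aemeasurable
          (ENNReal.ofReal_pos.2 (Real.exp_pos a)).ne' ENNReal.ofReal_ne_top
    _ = _ := by
        rw [lintegral_prodDensityMeasure_prod (g := g) hpm hp0 hθ.exp.ennreal_ofReal,
          ENNReal.div_eq_inv_mul, ← ENNReal.ofReal_inv_of_pos (Real.exp_pos a), ← Real.exp_neg]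
        congr 3 with ω
        rw [ENNReal.ofReal_mul (Real.exp_nonneg _), mul_comm]

theorem prodDensityMeasure_exists_le_sum_le {ι : Type*} [Fintype ι] (hpm : Measurable p)
    (hp0 : ∀ ω, 0 ≤ p ω) {θ : ι → Ω → ℝ} (hθ : ∀ k, Measurable (θ k)) {e a : ι → ℝ}
    (he : ∀ k, 0 ≤ e k) (ha : ∀ k, 0 < a k)
    (hdet : ∀ k, ∫⁻ ω, ENNReal.ofReal (Real.exp (θ k ω) * p ω) ∂P ≤ ENNReal.ofReal (e k)) :
    prodDensityMeasure P K p {y | ∃ k, Real.log (a k) ≤ ∑ t, θ k (y t)} ≤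
      ENNReal.ofReal (∑ k, e k ^ K / a k) := by
  rw [Set.ofPred_exists,
    ENNReal.ofReal_sum_of_nonneg fun k _ => div_nonneg (pow_nonneg (he k) K) (ha k).le]
  refine (measure_iUnion_fintype_le _ _).trans (Finset.sum_le_sum fun k _ => ?_)
  calc prodDensityMeasure P K p {y | Real.log (a k) ≤ ∑ t, θ k (y t)}
      ≤ ENNReal.ofReal (Real.exp (-Real.log (a k))) * ENNReal.ofReal (e k) ^ K := by
        grw [prodDensityMeasure_le_sum_le_exp_mul_pow hpm hp0 (hθ k), hdet k]
    _ = ENNReal.ofReal (e k ^ K / a k) := by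
        rw [Real.exp_neg, Real.exp_log (ha k), ← ENNReal.ofReal_pow (he k),
          ← ENNReal.ofReal_mul (inv_pos.2 (ha k)).le, inv_mul_eq_div]

end IIDObservations

theorem sum_div_div_eq_of_sum_mul_eq {ι : Type*} [Fintype ι] {x y : ι → ℝ} {c l : ℝ}
    (hc : c ≠ 0) (H : ∑ k, x k * y k = l * c) : ∑ k, x k / (c / y k) = l := by
  simp_rw [div_div_eq_mul_div, ← Finset.sum_div, H, mul_div_cancel_right₀ _ hc]

theorem color_inferring_test_general {Ω : Type*} [MeasurableSpace Ω] (P : Measure Ω)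
    [SigmaFinite P] {m : ℕ} (M : Set (Fin m → ℝ)) (p : (Fin m → ℝ) → Ω → ℝ)
    (hpm : ∀ μ ∈ M, Measurable (p μ)) (hp0 : ∀ μ ∈ M, ∀ ω, 0 ≤ p μ ω)
    {b r : ℕ}
    (B : Fin b → Set (Fin m → ℝ)) (R : Fin r → Set (Fin m → ℝ))
    (hBM : ∀ i, B i ⊆ M) (hRM : ∀ j, R j ⊆ M)
    (K : ℕ)
    (φ : Fin b → Fin r → Ω → ℝ) (hφ : ∀ i j, Measurable (φ i j))
    (ε : Fin b → Fin r → ℝ) (hε : ∀ i j, 0 < ε i j ∧ ε i j < 1)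
    (hdet1 : ∀ i j, ∀ μ ∈ B i,
      ∫⁻ ω, ENNReal.ofReal (Real.exp (-(φ i j ω)) * p μ ω) ∂P ≤ ENNReal.ofReal (ε i j))
    (hdet2 : ∀ i j, ∀ ν ∈ R j,
      ∫⁻ ω, ENNReal.ofReal (Real.exp (φ i j ω) * p ν ω) ∂P ≤ ENNReal.ofReal (ε i j))
    (g : Fin b → ℝ) (h : Fin r → ℝ) (hg : ∀ i, 0 < g i) (hh : ∀ j, 0 < h j)
    (εK : ℝ)
    (heig1 : ∀ i, ∑ j, ε i j ^ K * h j = εK * g i)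
    (heig2 : ∀ j, ∑ i, ε i j ^ K * g i = εK * h j)
    (ψ : Fin b → Fin r → (Fin K → Ω) → ℝ)
    (hψ : ∀ i j y, ψ i j y = (∑ t, φ i j (y t)) - Real.log (h j / g i)) :
    (∀ μ ∈ ⋃ i, B i,
      prodDensityMeasure P K (p μ) {y | ¬ ∃ i, ∀ j, 0 ≤ ψ i j y} ≤
        ENNReal.ofReal εK) ∧
    (∀ μ ∈ ⋃ j, R j,
      prodDensityMeasure P K (p μ) {y | ∃ i, ∀ j, 0 ≤ ψ i j y} ≤
        ENNReal.ofReal εK) := by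
  refine ⟨fun μ hμ => ?_, fun ν hν => ?_⟩
  · obtain ⟨i, hi⟩ := Set.mem_iUnion.1 hμ
    calc prodDensityMeasure P K (p μ) {y | ¬ ∃ i, ∀ j, 0 ≤ ψ i j y}
        ≤ prodDensityMeasure P K (p μ) {y | ∃ j, Real.log (g i / h j) ≤ ∑ t, -φ i j (y t)} := by
          refine measure_mono fun y hy => ?_
          obtain ⟨j, hj⟩ := not_forall.1 (not_exists.1 hy i)
          rw [hψ, Real.log_div (hh j).ne' (hg i).ne'] at hj
          refine ⟨j, ?_⟩
          rw [Real.log_div (hg i).ne' (hh j).ne', Finset.sum_neg_distrib]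
          linarith
      _ ≤ ENNReal.ofReal (∑ j, ε i j ^ K / (g i / h j)) :=
          prodDensityMeasure_exists_le_sum_le (hpm μ (hBM i hi)) (hp0 μ (hBM i hi))
            (fun j => (hφ i j).neg) (fun j => (hε i j).1.le) (fun j => div_pos (hg i) (hh j))
            (fun j => hdet1 i j μ hi)
      _ = ENNReal.ofReal εK := by rw [sum_div_div_eq_of_sum_mul_eq (hg i).ne' (heig1 i)]
  · obtain ⟨j, hj⟩ := Set.mem_iUnion.1 hν
    calc prodDensityMeasure P K (p ν) {y | ∃ i, ∀ j, 0 ≤ ψ i j y}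
        ≤ prodDensityMeasure P K (p ν) {y | ∃ i, Real.log (h j / g i) ≤ ∑ t, φ i j (y t)} :=
          measure_mono fun y ⟨i, hi⟩ => ⟨i, by linarith [hψ i j y ▸ hi j]⟩
      _ ≤ ENNReal.ofReal (∑ i, ε i j ^ K / (h j / g i)) :=
          prodDensityMeasure_exists_le_sum_le (hpm ν (hRM j hj)) (hp0 ν (hRM j hj))
            (fun i => hφ i j) (fun i => (hε i j).1.le) (fun i => div_pos (hh j) (hg i))
            (fun i => hdet2 i j ν hj)
      _ = ENNReal.ofReal εK := by rw [sum_div_div_eq_of_sum_mul_eq (hh j).ne' (heig2 j)]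

/-- The "color inferring" test. Given detectors `φ i j` with risks
`ε i j ∈ (0,1)` for the pairs (blue set `B i`, red set `R j`), a Perron–Frobenius
eigenvector `[g; h] > 0` with eigenvalue `εK` of the matrix built from `ε i j ^ K`, and
shifted detectors `ψ i j (ω^K) = Σ_t φ i j (ω_t) − ln(h j / g i)`, the test claiming
"blue" iff some row `i` has `ψ i j (ω^K) ≥ 0` for all `j` is correct with probability at
least `1 − εK` whenever the `K` observations are drawn i.i.d. from `p μ` with `μ` in the
union of the blue (resp. red) sets. -/
theorem color_inferring_test {Ω : Type*} [MeasurableSpace Ω] (P : Measure Ω)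
    [SigmaFinite P] {m : ℕ} (M : Set (Fin m → ℝ)) (p : (Fin m → ℝ) → Ω → ℝ)
    (hpm : ∀ μ ∈ M, Measurable (p μ)) (hp0 : ∀ μ ∈ M, ∀ ω, 0 ≤ p μ ω)
    (hp1 : ∀ μ ∈ M, ∫ ω, p μ ω ∂P = 1)
    {b r : ℕ} (hb : 0 < b) (hr : 0 < r)
    (B : Fin b → Set (Fin m → ℝ)) (R : Fin r → Set (Fin m → ℝ))
    (hBne : ∀ i, (B i).Nonempty) (hRne : ∀ j, (R j).Nonempty)
    (hBM : ∀ i, B i ⊆ M) (hRM : ∀ j, R j ⊆ M)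
    (K : ℕ) (hK : 0 < K)
    (φ : Fin b → Fin r → Ω → ℝ) (hφ : ∀ i j, Measurable (φ i j))
    (ε : Fin b → Fin r → ℝ) (hε : ∀ i j, 0 < ε i j ∧ ε i j < 1)
    (hdet1 : ∀ i j, ∀ μ ∈ B i,
      ∫⁻ ω, ENNReal.ofReal (Real.exp (-(φ i j ω)) * p μ ω) ∂P ≤ ENNReal.ofReal (ε i j))
    (hdet2 : ∀ i j, ∀ ν ∈ R j,
      ∫⁻ ω, ENNReal.ofReal (Real.exp (φ i j ω) * p ν ω) ∂P ≤ ENNReal.ofReal (ε i j))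
    (g : Fin b → ℝ) (h : Fin r → ℝ) (hg : ∀ i, 0 < g i) (hh : ∀ j, 0 < h j)
    (εK : ℝ)
    (heig1 : ∀ i, ∑ j, ε i j ^ K * h j = εK * g i)
    (heig2 : ∀ j, ∑ i, ε i j ^ K * g i = εK * h j)
    (ψ : Fin b → Fin r → (Fin K → Ω) → ℝ)
    (hψ : ∀ i j y, ψ i j y = (∑ t, φ i j (y t)) - Real.log (h j / g i)) :
    (∀ μ ∈ ⋃ i, B i,
      prodDensityMeasure P K (p μ) {y | ¬ ∃ i, ∀ j, 0 ≤ ψ i j y} ≤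
        ENNReal.ofReal εK) ∧
    (∀ μ ∈ ⋃ j, R j,
      prodDensityMeasure P K (p μ) {y | ∃ i, ∀ j, 0 ≤ ψ i j y} ≤
        ENNReal.ofReal εK) :=
  color_inferring_test_general P M p hpm hp0 B R hBM hRM K φ hφ ε hε hdet1 hdet2 g h hg hh εK heig1
    heig2 ψ hψ
end

section
/- Let O = ((Ω,P), {p_μ : μ∈M}, F) be a good observation scheme, let M_1, M_2 be nonempty convex compact subsets of M, and let Opt = max_{μ∈M_1, ν∈M_2} ln(∫_Ω √(p_μ(ω) p_ν(ω)) P(dω)) (the maximum is attained), with optimal solution (μ_*, ν_*), ε_* = e^{Opt}, and detector φ_*(ω) = ½ ln(p_{μ_*}(ω)/p_{ν_*}(ω)). Then for every positive integer K: for every μ ∈ M_1, the probability under K i.i.d. draws ω_1,…,ω_K from p_μ that Σ_{t=1}^K φ_*(ω_t) < 0 is at most ε_*^K, and for every ν ∈ M_2, the probability under K i.i.d. draws from p_ν that Σ_{t=1}^K φ_*(ω_t) ≥ 0 is at most ε_*^K. In other words, the test which accepts hypothesis H_1 : μ ∈ M_1 when Σ_t φ_*(ω_t) ≥ 0 and accepts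 H_2 : μ ∈ M_2 otherwise has risk at most ε_*^K. -/
open MeasureTheory

/-- A *good observation scheme* `((Ω,P), {p_μ : μ ∈ M}, F)` in the sense of
Goldenshluger–Juditsky–Nemirovski: `Ω` is a Polish space carrying a σ-finite Borel
measure `P` of full support, `M ⊆ ℝ^m` is a convex relatively open set, each `p_μ`
(`μ ∈ M`) is a positive probability density w.r.t. `P`, jointly continuous in `(μ,ω)`,
and `F` is a finite-dimensional space of continuous functions containing the constants
and all log-likelihood ratios, on which the function
`Φ(φ;μ) = ln ∫ e^{φ} p_μ dP` is real-valued and concave in `μ`. -/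
structure GoodOS (Ω : Type) [TopologicalSpace Ω] [PolishSpace Ω] [MeasurableSpace Ω]
    [BorelSpace Ω] (m : ℕ) where
  P : Measure Ω
  sigmaFinite : SigmaFinite P
  full_support : ∀ U : Set Ω, IsOpen U → U.Nonempty → 0 < P U
  M : Set (Fin m → ℝ)
  M_convex : Convex ℝ M
  M_relatively_open : IsOpen (Subtype.val ⁻¹' M : Set (affineSpan ℝ M))
  p : (Fin m → ℝ) → Ω → ℝ
  p_pos : ∀ μ ∈ M, ∀ ω : Ω, 0 < p μ ω
  p_cont : ContinuousOn (fun q : (Fin m → ℝ) × Ω => p q.1 q.2) (M ×ˢ Set.univ)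
  p_prob : ∀ μ ∈ M, ∫ ω, p μ ω ∂P = 1
  F : Submodule ℝ (Ω → ℝ)
  F_finiteDimensional : FiniteDimensional ℝ F
  F_cont : ∀ φ ∈ F, Continuous φ
  F_const : ∀ c : ℝ, (fun _ : Ω => c) ∈ F
  F_logratio : ∀ μ ∈ M, ∀ ν ∈ M, (fun ω => Real.log (p μ ω / p ν ω)) ∈ F
  mgf_integrable : ∀ φ ∈ F, ∀ μ ∈ M,
    Integrable (fun ω => Real.exp (φ ω) * p μ ω) P
  mgf_pos : ∀ φ ∈ F, ∀ μ ∈ M, 0 < ∫ ω, Real.exp (φ ω) * p μ ω ∂P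
  mgf_concave : ∀ φ ∈ F,
    ConcaveOn ℝ M fun μ => Real.log (∫ ω, Real.exp (φ ω) * p μ ω ∂P)

/-!
Write `ψ_c = ½ ln (p_{ν*} / p_c)`, so that `ψ_{μ*} = -φ_*`. By the Chernoff bound for i.i.d.
observations it suffices to show `∫ e^{ψ_{μ*}} p_μ dP ≤ ε_*` for `μ ∈ M₁`; the bound on `M₂` is the
same statement with the roles of the two sets exchanged.

For `c = (1 - t) μ_* + t μ` with `0 < t ≤ 1`, Cauchy–Schwarz gives
`ε_*² ≤ ∫ e^{ψ_c} p_{μ*} · ∫ e^{-ψ_c} p_{ν*}`. Both `∫ e^{-ψ_c} p_{ν*}` and `∫ e^{ψ_c} p_c`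
equal the affinity `∫ √(p_c p_{ν*})`, which is at most `ε_*` by optimality, so concavity of
`μ ↦ ln ∫ e^{ψ_c} p_μ` along the segment forces `∫ e^{ψ_c} p_μ ≤ ε_*`. Letting `t → 0`,
`ψ_c → ψ_{μ*}` pointwise by continuity of the density in the parameter, and Fatou's lemma gives
the bound at `μ_*`.
-/

open Filter Topology

theorem Real.sqrt_mul_le_half_add {a b c : ℝ} (ha : 0 ≤ a) (hb : 0 ≤ b) (hc : 0 < c) :
    √(a * b) ≤ (c * a + b / c) / 2 := by
  have key := two_mul_le_add_sq √(c * a) √(b / c)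
  rw [Real.sq_sqrt (by positivity), Real.sq_sqrt (by positivity), mul_assoc,
    ← Real.sqrt_mul (by positivity), show c * a * (b / c) = a * b by field_simp] at key
  linarith

theorem Real.exp_half_log_div_mul {a b : ℝ} (ha : 0 < a) (hb : 0 < b) :
    Real.exp (1 / 2 * Real.log (a / b)) * b = √(a * b) := by
  have h : Real.exp (1 / 2 * Real.log (a / b)) = √(a / b) := by
    rw [Real.sqrt_eq_rpow, Real.rpow_def_of_pos (div_pos ha hb), mul_comm]
  have hb' : 0 < √b := Real.sqrt_pos.2 hb
  rw [h, Real.sqrt_div ha.le, Real.sqrt_mul ha.le]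
  field_simp
  rw [Real.sq_sqrt hb.le]

section Integral

variable {α : Type*} [MeasurableSpace α] {μ : Measure α}

theorem integral_sqrt_mul_le {f g : α → ℝ} (hf : Integrable f μ) (hg : Integrable g μ)
    (hf0 : 0 ≤ f) (hg0 : 0 ≤ g) (hfpos : 0 < ∫ x, f x ∂μ) (hgpos : 0 < ∫ x, g x ∂μ) :
    ∫ x, √(f x * g x) ∂μ ≤ √((∫ x, f x ∂μ) * ∫ x, g x ∂μ) := by
  set A := ∫ x, f x ∂μ
  set B := ∫ x, g x ∂μ
  -- the weight for which the AM-GM bound below is tight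
  set c := √B / √A
  have hc : 0 < c := by positivity
  calc ∫ x, √(f x * g x) ∂μ ≤ ∫ x, (c * f x + g x / c) / 2 ∂μ :=
        integral_mono_of_nonneg (ae_of_all _ fun x => by positivity)
          (((hf.const_mul c).add (hg.div_const c)).div_const 2)
          (ae_of_all _ fun x => Real.sqrt_mul_le_half_add (hf0 x) (hg0 x) hc)
    _ = (c * A + B / c) / 2 := by
        rw [integral_div, integral_add (hf.const_mul c) (hg.div_const c), integral_const_mul,
          integral_div]
    _ = √(A * B) := by
        have key : ∀ a b : ℝ, 0 < a → 0 < b → (b / a * a ^ 2 + b ^ 2 / (b / a)) / 2 = a * b :=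
          fun a b ha hb => by field_simp; ring
        rw [Real.sqrt_mul hfpos.le]
        simpa only [Real.sq_sqrt hfpos.le, Real.sq_sqrt hgpos.le] using
          key √A √B (Real.sqrt_pos.2 hfpos) (Real.sqrt_pos.2 hgpos)

theorem integral_le_of_tendsto_of_integral_le {f : ℕ → α → ℝ} {g : α → ℝ} {C : ℝ}
    (hf : ∀ n, Integrable (f n) μ) (hf0 : ∀ n, 0 ≤ᵐ[μ] f n)
    (hlim : ∀ᵐ x ∂μ, Tendsto (fun n => f n x) atTop (𝓝 (g x)))
    (hC : ∀ n, ∫ x, f n x ∂μ ≤ C) :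
    ∫ x, g x ∂μ ≤ C := by
  have hC0 : 0 ≤ C := (integral_nonneg_of_ae (hf0 0)).trans (hC 0)
  have hg0 : 0 ≤ᵐ[μ] g := by
    filter_upwards [hlim, ae_all_iff.2 hf0] with x hx hx0
    exact ge_of_tendsto' hx hx0
  rw [integral_eq_lintegral_of_nonneg_ae hg0
    (aemeasurable_of_tendsto_metrizable_ae' (fun n => (hf n).1.aemeasurable)
      hlim).aestronglyMeasurable]
  refine ENNReal.toReal_le_of_le_ofReal hC0 ?_
  calc ∫⁻ x, ENNReal.ofReal (g x) ∂μ
      = ∫⁻ x, liminf (fun n => ENNReal.ofReal (f n x)) atTop ∂μ := by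
        refine lintegral_congr_ae ?_
        filter_upwards [hlim] with x hx
        exact ((ENNReal.continuous_ofReal.tendsto _).comp hx).liminf_eq.symm
    _ ≤ liminf (fun n => ∫⁻ x, ENNReal.ofReal (f n x) ∂μ) atTop :=
        lintegral_liminf_le' fun n => (hf n).1.aemeasurable.ennreal_ofReal
    _ ≤ ENNReal.ofReal C := by
        refine liminf_le_of_frequently_le' (Frequently.of_forall fun n => ?_)
        rw [← ofReal_integral_eq_lintegral_ofReal (hf n) (hf0 n)]
        exact ENNReal.ofReal_le_ofReal (hC n)

end Integral

theorem prodDensityMeasure_setOf_sum_nonneg_le {α : Type*} [MeasurableSpace α] (P : Measure α)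
    [SigmaFinite P] (K : ℕ) {q ξ : α → ℝ} (hq : 0 ≤ q)
    (hint : Integrable (fun x => Real.exp (ξ x) * q x) P) :
    prodDensityMeasure P K q {y | 0 ≤ ∑ t, ξ (y t)} ≤
      ENNReal.ofReal ((∫ x, Real.exp (ξ x) * q x ∂P) ^ K) := by
  have hprod : Integrable (fun y : Fin K → α => ∏ t, Real.exp (ξ (y t)) * q (y t))
      (Measure.pi fun _ => P) :=
    Integrable.fintype_prod (f := fun _ x => Real.exp (ξ x) * q x) fun _ => hint
  rw [prodDensityMeasure, withDensity_apply']
  calc ∫⁻ y in {y | 0 ≤ ∑ t, ξ (y t)}, ENNReal.ofReal (∏ t, q (y t))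
        ∂(Measure.pi fun _ : Fin K => P)
      ≤ ∫⁻ y in {y | 0 ≤ ∑ t, ξ (y t)}, ENNReal.ofReal (∏ t, Real.exp (ξ (y t)) * q (y t))
          ∂(Measure.pi fun _ => P) := by
        refine setLIntegral_mono_ae hprod.1.aemeasurable.ennreal_ofReal.restrict
          (ae_of_all _ fun y hy => ENNReal.ofReal_le_ofReal ?_)
        rw [Finset.prod_mul_distrib, ← Real.exp_sum]
        exact le_mul_of_one_le_left (Finset.prod_nonneg fun t _ => hq _) (Real.one_le_exp hy)
    _ ≤ ∫⁻ y, ENNReal.ofReal (∏ t, Real.exp (ξ (y t)) * q (y t)) ∂(Measure.pi fun _ => P) :=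
        setLIntegral_le_lintegral _ _
    _ = ENNReal.ofReal ((∫ x, Real.exp (ξ x) * q x ∂P) ^ K) := by
        rw [← ofReal_integral_eq_lintegral_ofReal hprod
          (ae_of_all _ fun y => Finset.prod_nonneg fun t _ =>
            mul_nonneg (Real.exp_pos _).le (hq _)),
          integral_fintype_prod_eq_pow (fun x => Real.exp (ξ x) * q x), Fintype.card_fin]

namespace GoodOS

variable {Ω : Type} [TopologicalSpace Ω] [PolishSpace Ω] [MeasurableSpace Ω] [BorelSpace Ω]
  {m : ℕ} (O : GoodOS Ω m)

/-- The paper's `Φ(φ; μ)` is `ln (O.mgf φ μ)`. -/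
noncomputable def mgf (φ : Ω → ℝ) (μ : Fin m → ℝ) : ℝ := ∫ ω, Real.exp (φ ω) * O.p μ ω ∂O.P

noncomputable def affinity (μ ν : Fin m → ℝ) : ℝ := ∫ ω, √(O.p μ ω * O.p ν ω) ∂O.P

noncomputable def detector (μ ν : Fin m → ℝ) : Ω → ℝ :=
  fun ω => 1 / 2 * Real.log (O.p μ ω / O.p ν ω)

theorem detector_mem {μ ν : Fin m → ℝ} (hμ : μ ∈ O.M) (hν : ν ∈ O.M) : O.detector μ ν ∈ O.F :=
  O.F.smul_mem (1 / 2) (O.F_logratio μ hμ ν hν)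

theorem detector_swap (μ ν : Fin m → ℝ) : O.detector ν μ = -O.detector μ ν := by
  funext ω
  simp only [detector, Pi.neg_apply, ← inv_div (O.p μ ω), Real.log_inv]
  ring

theorem affinity_comm (μ ν : Fin m → ℝ) : O.affinity μ ν = O.affinity ν μ := by
  simp only [affinity, mul_comm]

theorem mgf_detector_self {μ ν : Fin m → ℝ} (hμ : μ ∈ O.M) (hν : ν ∈ O.M) :
    O.mgf (O.detector μ ν) ν = O.affinity μ ν :=
  integral_congr_ae <| ae_of_all _ fun ω =>
    Real.exp_half_log_div_mul (O.p_pos μ hμ ω) (O.p_pos ν hν ω)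

theorem affinity_pos {μ ν : Fin m → ℝ} (hμ : μ ∈ O.M) (hν : ν ∈ O.M) : 0 < O.affinity μ ν :=
  O.mgf_detector_self hμ hν ▸ O.mgf_pos _ (O.detector_mem hμ hν) ν hν

theorem affinity_le_sqrt_mgf_mul_mgf {φ : Ω → ℝ} (hφ : φ ∈ O.F) {μ ν : Fin m → ℝ}
    (hμ : μ ∈ O.M) (hν : ν ∈ O.M) :
    O.affinity μ ν ≤ √(O.mgf φ μ * O.mgf (-φ) ν) := by
  have hprod : ∀ ω, (Real.exp (φ ω) * O.p μ ω) * (Real.exp ((-φ) ω) * O.p ν ω) =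
      O.p μ ω * O.p ν ω := fun ω => by
    rw [Pi.neg_apply, Real.exp_neg]
    field_simp
  simpa only [affinity, mgf, hprod] using integral_sqrt_mul_le (O.mgf_integrable φ hφ μ hμ)
    (O.mgf_integrable (-φ) (O.F.neg_mem hφ) ν hν)
    (fun ω => mul_nonneg (Real.exp_pos _).le (O.p_pos μ hμ ω).le)
    (fun ω => mul_nonneg (Real.exp_pos _).le (O.p_pos ν hν ω).le)
    (O.mgf_pos φ hφ μ hμ) (O.mgf_pos (-φ) (O.F.neg_mem hφ) ν hν)

theorem tendsto_detector {ι : Type*} {l : Filter ι} {c : ι → Fin m → ℝ} {μ ν : Fin m → ℝ}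
    (hc : Tendsto c l (𝓝 ν)) (hcM : ∀ i, c i ∈ O.M) (hμ : μ ∈ O.M) (hν : ν ∈ O.M) (ω : Ω) :
    Tendsto (fun i => O.detector μ (c i) ω) l (𝓝 (O.detector μ ν ω)) := by
  have hp : Tendsto (fun i => O.p (c i) ω) l (𝓝 (O.p ν ω)) :=
    (O.p_cont (ν, ω) ⟨hν, trivial⟩).tendsto.comp <| tendsto_nhdsWithin_iff.2
      ⟨hc.prodMk_nhds tendsto_const_nhds, Eventually.of_forall fun i => ⟨hcM i, trivial⟩⟩
  exact ((tendsto_const_nhds.div hp (O.p_pos ν hν ω).ne').log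
    (div_pos (O.p_pos μ hμ ω) (O.p_pos ν hν ω)).ne').const_mul _

section Optimality

variable {X : Set (Fin m → ℝ)} {xs r : Fin m → ℝ}

theorem mgf_detector_segment_le (hXM : X ⊆ O.M) (hX : Convex ℝ X) (hxs : xs ∈ X)
    (hr : r ∈ O.M) (hmax : IsMaxOn (O.affinity · r) X xs) {x : Fin m → ℝ} (hx : x ∈ X)
    {t : ℝ} (ht0 : 0 < t) (ht1 : t ≤ 1) :
    O.mgf (O.detector r ((1 - t) • xs + t • x)) x ≤ O.affinity xs r := by
  set c := (1 - t) • xs + t • x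
  have hcX : c ∈ X := hX hxs hx (by linarith) ht0.le (by ring)
  have hc := hXM hcX
  set ψ := O.detector r c with hψ_def
  have hψ : ψ ∈ O.F := O.detector_mem hr hc
  have hmgf_c : O.mgf ψ c = O.affinity c r := by
    rw [O.mgf_detector_self hr hc, O.affinity_comm c r]
  have hmgf_r : O.mgf (-ψ) r = O.affinity c r := by
    rw [hψ_def, O.detector_swap c r, neg_neg, O.mgf_detector_self hc hr]
  have hB : 0 < O.mgf ψ xs := O.mgf_pos ψ hψ xs (hXM hxs)
  have hI := O.affinity_pos hc hr
  have hopt : Real.log (O.affinity c r) ≤ Real.log (O.affinity xs r) :=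
    Real.log_le_log hI (hmax hcX)
  have hCS : 2 * Real.log (O.affinity xs r) ≤
      Real.log (O.mgf ψ xs) + Real.log (O.affinity c r) := by
    have h := O.affinity_le_sqrt_mgf_mul_mgf hψ (hXM hxs) hr
    rw [hmgf_r] at h
    have := Real.log_le_log (O.affinity_pos (hXM hxs) hr) h
    rw [Real.log_sqrt (mul_pos hB hI).le, Real.log_mul hB.ne' hI.ne'] at this
    linarith
  have hconc : (1 - t) * Real.log (O.mgf ψ xs) + t * Real.log (O.mgf ψ x) ≤
      Real.log (O.affinity c r) := by
    rw [← hmgf_c]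
    exact (O.mgf_concave ψ hψ).2 (hXM hxs) (hXM hx) (by linarith) ht0.le (by ring)
  -- With `B, D` the `mgf ψ` at `xs, x` and `I, S` the affinities of `(c, r), (xs, r)`:
  -- `t log D ≤ log I - (1 - t) log B ≤ (2 - t) log I - 2 (1 - t) log S ≤ t log S`.
  have hlog : Real.log (O.mgf ψ x) ≤ Real.log (O.affinity xs r) := by
    nlinarith [mul_le_mul_of_nonneg_left hCS (by linarith : (0 : ℝ) ≤ 1 - t),
      mul_le_mul_of_nonneg_left hopt (by linarith : (0 : ℝ) ≤ 2 - t)]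
  exact (Real.log_le_log_iff (O.mgf_pos ψ hψ x (hXM hx)) (O.affinity_pos (hXM hxs) hr)).1 hlog

theorem mgf_detector_le_affinity (hXM : X ⊆ O.M) (hX : Convex ℝ X) (hxs : xs ∈ X)
    (hr : r ∈ O.M) (hmax : IsMaxOn (O.affinity · r) X xs) {x : Fin m → ℝ} (hx : x ∈ X) :
    O.mgf (O.detector r xs) x ≤ O.affinity xs r := by
  set t : ℕ → ℝ := fun n => 1 / ((n : ℝ) + 1)
  have ht0 (n : ℕ) : 0 < t n := by positivity
  have ht1 (n : ℕ) : t n ≤ 1 := div_le_one_of_le₀ (by simp) (by positivity)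
  have hcM (n : ℕ) : (1 - t n) • xs + t n • x ∈ O.M :=
    hXM (hX hxs hx (by linarith [ht1 n]) (ht0 n).le (by ring))
  have hc : Tendsto (fun n => (1 - t n) • xs + t n • x) atTop (𝓝 xs) := by
    have hcont : Continuous fun s : ℝ => (1 - s) • xs + s • x := by fun_prop
    have h := (hcont.tendsto 0).comp (tendsto_one_div_add_atTop_nhds_zero_nat (𝕜 := ℝ))
    rwa [sub_zero, one_smul, zero_smul, add_zero] at h
  refine integral_le_of_tendsto_of_integral_le
    (fun n => O.mgf_integrable _ (O.detector_mem hr (hcM n)) x (hXM hx))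
    (fun n => ae_of_all _ fun ω => mul_nonneg (Real.exp_pos _).le (O.p_pos x (hXM hx) ω).le)
    (ae_of_all _ fun ω => ?_)
    (fun n => O.mgf_detector_segment_le hXM hX hxs hr hmax hx (ht0 n) (ht1 n))
  exact ((O.tendsto_detector hc hcM hr (hXM hxs) ω).rexp).mul_const _

end Optimality

theorem prodDensityMeasure_setOf_sum_nonneg_le_of_mgf_le {φ : Ω → ℝ} (hφ : φ ∈ O.F)
    {μ : Fin m → ℝ} (hμ : μ ∈ O.M) (K : ℕ) {ε : ℝ} (hε : O.mgf φ μ ≤ ε) :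
    prodDensityMeasure O.P K (O.p μ) {y | 0 ≤ ∑ t, φ (y t)} ≤ ENNReal.ofReal (ε ^ K) :=
  haveI := O.sigmaFinite
  (prodDensityMeasure_setOf_sum_nonneg_le O.P K (fun ω => (O.p_pos μ hμ ω).le)
    (O.mgf_integrable φ hφ μ hμ)).trans <|
      ENNReal.ofReal_le_ofReal <| pow_le_pow_left₀ (O.mgf_pos φ hφ μ hμ).le hε K

end GoodOS

theorem detector_test_risk_general {Ω : Type} [TopologicalSpace Ω] [PolishSpace Ω]
    [MeasurableSpace Ω] [BorelSpace Ω] {m : ℕ} (O : GoodOS Ω m)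
    (M₁ M₂ : Set (Fin m → ℝ))
    (h₁M : M₁ ⊆ O.M) (h₂M : M₂ ⊆ O.M)
    (h₁c : Convex ℝ M₁)
    (h₂c : Convex ℝ M₂)
    (μs νs : Fin m → ℝ) (hμs : μs ∈ M₁) (hνs : νs ∈ M₂)
    (hopt : ∀ μ ∈ M₁, ∀ ν ∈ M₂,
      Real.log (∫ ω, Real.sqrt (O.p μ ω * O.p ν ω) ∂O.P) ≤
        Real.log (∫ ω, Real.sqrt (O.p μs ω * O.p νs ω) ∂O.P))
    (εs : ℝ)
    (hεs : εs = Real.exp (Real.log (∫ ω, Real.sqrt (O.p μs ω * O.p νs ω) ∂O.P)))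
    (φs : Ω → ℝ) (hφs : φs = fun ω => (1 / 2) * Real.log (O.p μs ω / O.p νs ω))
    (K : ℕ) :
    (∀ μ ∈ M₁,
      prodDensityMeasure O.P K (O.p μ) {y | (∑ t, φs (y t)) < 0} ≤
        ENNReal.ofReal (εs ^ K)) ∧
    (∀ ν ∈ M₂,
      prodDensityMeasure O.P K (O.p ν) {y | 0 ≤ ∑ t, φs (y t)} ≤
        ENNReal.ofReal (εs ^ K)) := by
  have hμsM := h₁M hμs
  have hνsM := h₂M hνs
  have hS := O.affinity_pos hμsM hνsM
  replace hφs : φs = O.detector μs νs := hφs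
  replace hεs : εs = O.affinity μs νs := by rw [hεs]; exact Real.exp_log hS
  have hmax₁ : IsMaxOn (O.affinity · νs) M₁ μs := fun μ hμ =>
    (Real.log_le_log_iff (O.affinity_pos (h₁M hμ) hνsM) hS).1 (hopt μ hμ νs hνs)
  have hmax₂ : IsMaxOn (O.affinity · μs) M₂ νs := fun ν hν => by
    show O.affinity ν μs ≤ O.affinity νs μs
    rw [O.affinity_comm, O.affinity_comm νs]
    exact (Real.log_le_log_iff (O.affinity_pos hμsM (h₂M hν)) hS).1 (hopt μs hμs ν hν)
  subst hφs hεs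
  refine ⟨fun μ hμ => ?_, fun ν hν => ?_⟩
  · refine (measure_mono fun y hy => ?_).trans
      (O.prodDensityMeasure_setOf_sum_nonneg_le_of_mgf_le (O.detector_mem hνsM hμsM) (h₁M hμ) K
        (O.mgf_detector_le_affinity h₁M h₁c hμs hνsM hmax₁ hμ))
    simp only [Set.mem_ofPred_eq, O.detector_swap μs νs, Pi.neg_apply,
      Finset.sum_neg_distrib] at hy ⊢
    linarith
  · rw [O.affinity_comm]
    exact O.prodDensityMeasure_setOf_sum_nonneg_le_of_mgf_le (O.detector_mem hμsM hνsM) (h₂M hν) K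
      (O.mgf_detector_le_affinity h₂M h₂c hνs hμsM hmax₂ hν)

/-- In a good observation scheme, with `(μ_*, ν_*)` an optimal solution
of `max_{μ∈M₁,ν∈M₂} ln ∫ √(p_μ p_ν) dP`, `ε_* = e^{Opt}` and the detector
`φ_*(ω) = ½ ln(p_{μ_*}(ω)/p_{ν_*}(ω))`, the test accepting `H₁ : μ ∈ M₁` when
`Σ_t φ_*(ω_t) ≥ 0` and `H₂ : μ ∈ M₂` otherwise has risk at most `ε_*^K` on stationary
`K`-repeated observations. -/
theorem detector_test_risk {Ω : Type} [TopologicalSpace Ω] [PolishSpace Ω]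
    [MeasurableSpace Ω] [BorelSpace Ω] {m : ℕ} (O : GoodOS Ω m)
    (M₁ M₂ : Set (Fin m → ℝ)) (h₁ne : M₁.Nonempty) (h₂ne : M₂.Nonempty)
    (h₁M : M₁ ⊆ O.M) (h₂M : M₂ ⊆ O.M)
    (h₁c : Convex ℝ M₁) (h₁k : IsCompact M₁)
    (h₂c : Convex ℝ M₂) (h₂k : IsCompact M₂)
    (μs νs : Fin m → ℝ) (hμs : μs ∈ M₁) (hνs : νs ∈ M₂)
    (hopt : ∀ μ ∈ M₁, ∀ ν ∈ M₂,
      Real.log (∫ ω, Real.sqrt (O.p μ ω * O.p ν ω) ∂O.P) ≤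
        Real.log (∫ ω, Real.sqrt (O.p μs ω * O.p νs ω) ∂O.P))
    (εs : ℝ)
    (hεs : εs = Real.exp (Real.log (∫ ω, Real.sqrt (O.p μs ω * O.p νs ω) ∂O.P)))
    (φs : Ω → ℝ) (hφs : φs = fun ω => (1 / 2) * Real.log (O.p μs ω / O.p νs ω))
    (K : ℕ) (hK : 0 < K) :
    (∀ μ ∈ M₁,
      prodDensityMeasure O.P K (O.p μ) {y | (∑ t, φs (y t)) < 0} ≤
        ENNReal.ofReal (εs ^ K)) ∧
    (∀ ν ∈ M₂,
      prodDensityMeasure O.P K (O.p ν) {y | 0 ≤ ∑ t, φs (y t)} ≤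
        ENNReal.ofReal (εs ^ K)) :=
  detector_test_risk_general O M₁ M₂ h₁M h₂M h₁c h₂c μs νs hμs hνs hopt εs hεs φs hφs K
end

section
/- Let S = {s_1 < s_2 < … < s_M} ⊂ ℝ, let r be a probability vector on S with all entries positive, and define F_m(r) = Σ_{i=1}^m r_i. Define the regularized cumulative distribution G_r : [s_1, s_M] → [0,1] by G_r(s_1) = F_1(r) and, for s ∈ [s_k, s_{k+1}] (1 ≤ k ≤ M−1), G_r(s) = F_k(r) + r_{k+1}(s − s_k)/(s_{k+1} − s_k); and define the regularized α-quantile χ_α[r] = min{ s ∈ [s_1, s_M] : G_r(s) ≥ α } for α ∈ [0,1]. Then for every α ∈ [0,1], every k with 1 ≤ k ≤ M−1, and every s with s_k < s ≤ s_{k+1}: χ_α[r] ≤ s if and only if (s_{k+1} − s) F_k(r) + (s − s_k) F_{k+1}(r) ≥ α (s_{k+1} − s_k), and χ_α[r] ≥ s if and only if (s_{k+1} − s) F_k(r) + (s − s_k) F_{k+1}(r) ≤ α (s_{k+1} − s_k). Consequently each level set {r : χ_α[r] ≤ s} and {r : χ_α[r] ≥ s} within the set of positive probability vectors is cut out by a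 single nonstrict linear inequality in r, i.e., the regularized quantile is 1-convex. -/
/-!
On `[s 0, s (M - 1)]` the regularized c.d.f. `G r` is continuous and strictly increasing: it is
affine with slope proportional to `r k > 0` on the `k`-th segment, and the pieces glue. It ends at
the value `1 ≥ α`, so the infimum defining `χ r α` is attained, whence `χ r α ≤ x ↔ α ≤ G r x`;
and by left continuity at `x > s 0`, `x ≤ χ r α ↔ G r x ≤ α`. On the `k`-th segment
`(s k - x) F r k + (x - s (k - 1)) F r (k + 1) = (s k - s (k - 1)) G r x`, which is linear in `r`,
so both level sets are the positive probability vectors cut by a half-space.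
-/

open Set Filter Topology

section Gluing

variable {α β : Type*} [LinearOrder α] {s : ℕ → α} {f : α → β}

theorem strictMonoOn_Icc_of_forall_Icc_succ [Preorder β] {n : ℕ} (hs : MonotoneOn s (Iic n))
    (hf : ∀ j < n, StrictMonoOn f (Icc (s j) (s (j + 1)))) :
    StrictMonoOn f (Icc (s 0) (s n)) := by
  induction n with
  | zero => simp
  | succ n ih =>
    have h0n : s 0 ≤ s n := hs (mem_Iic.2 (Nat.zero_le _)) (mem_Iic.2 n.le_succ) n.zero_le
    have hn : s n ≤ s (n + 1) := hs (mem_Iic.2 n.le_succ) (mem_Iic.2 le_rfl) n.le_succ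
    rw [← Icc_union_Icc_eq_Icc h0n hn]
    exact (ih (hs.mono (Iic_subset_Iic.2 n.le_succ)) fun j hj => hf j (by omega)).union
      (hf n n.lt_succ_self) (isGreatest_Icc h0n) (isLeast_Icc hn)

theorem continuousOn_Icc_of_forall_Icc_succ [TopologicalSpace α] [OrderClosedTopology α]
    [TopologicalSpace β] {n : ℕ} (hs : MonotoneOn s (Iic n))
    (hf : ∀ j < n, ContinuousOn f (Icc (s j) (s (j + 1)))) :
    ContinuousOn f (Icc (s 0) (s n)) := by
  induction n with
  | zero => simp
  | succ n ih =>
    have h0n : s 0 ≤ s n := hs (mem_Iic.2 (Nat.zero_le _)) (mem_Iic.2 n.le_succ) n.zero_le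
    have hn : s n ≤ s (n + 1) := hs (mem_Iic.2 n.le_succ) (mem_Iic.2 le_rfl) n.le_succ
    rw [← Icc_union_Icc_eq_Icc h0n hn]
    exact (ih (hs.mono (Iic_subset_Iic.2 n.le_succ)) fun j hj => hf j (by omega)).union_of_isClosed
      (hf n n.lt_succ_self) isClosed_Icc isClosed_Icc

end Gluing

section Superlevel

variable {f : ℝ → ℝ} {a b α x : ℝ}

theorem sInf_superlevel_le_iff (hf : MonotoneOn f (Icc a b)) (hc : ContinuousOn f (Icc a b))
    (hα : α ≤ f b) (hx : x ∈ Icc a b) :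
    sInf {y | a ≤ y ∧ y ≤ b ∧ α ≤ f y} ≤ x ↔ α ≤ f x := by
  set S := {y | a ≤ y ∧ y ≤ b ∧ α ≤ f y}
  have hbdd : BddBelow S := ⟨a, fun y hy => hy.1⟩
  have hclosed : IsClosed S := by
    convert hc.preimage_isClosed_of_isClosed isClosed_Icc (isClosed_Ici (a := α)) using 1
    ext y
    simp [S, and_assoc]
  have hmem : sInf S ∈ S := hclosed.csInf_mem ⟨b, hx.1.trans hx.2, le_rfl, hα⟩ hbdd
  exact ⟨fun h => hmem.2.2.trans (hf ⟨hmem.1, hmem.2.1⟩ hx h),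
    fun h => csInf_le hbdd ⟨hx.1, hx.2, h⟩⟩

theorem le_sInf_superlevel_iff (hf : StrictMonoOn f (Icc a b)) (hc : ContinuousOn f (Icc a b))
    (hα : α ≤ f b) (hax : a < x) (hxb : x ≤ b) :
    x ≤ sInf {y | a ≤ y ∧ y ≤ b ∧ α ≤ f y} ↔ f x ≤ α := by
  set S := {y | a ≤ y ∧ y ≤ b ∧ α ≤ f y}
  constructor
  · intro hxS
    by_contra! hlt
    have hnear : ∀ᶠ y in 𝓝[Ico a x] x, α < f y :=
      nhdsWithin_mono _ (Ico_subset_Icc_self.trans (Icc_subset_Icc_right hxb))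
        ((hc x ⟨hax.le, hxb⟩).eventually (lt_mem_nhds hlt))
    have := right_nhdsWithin_Ico_neBot hax
    obtain ⟨y, hαy, hy⟩ := (hnear.and self_mem_nhdsWithin).exists
    have : sInf S ≤ y := csInf_le ⟨a, fun z hz => hz.1⟩ ⟨hy.1, hy.2.le.trans hxb, hαy.le⟩
    linarith [hy.2]
  · intro hxα
    refine le_csInf ⟨b, hax.le.trans hxb, le_rfl, hα⟩ fun y hy => ?_
    by_contra! hyx
    exact (hf ⟨hy.1, hy.2.1⟩ ⟨hax.le, hxb⟩ hyx).not_ge (hxα.trans hy.2.2)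

end Superlevel

theorem strictMono_add_mul_sub_div {a b c d : ℝ} (hab : a < b) (hd : 0 < d) :
    StrictMono fun y => c + d * (y - a) / (b - a) := by
  intro y z hyz
  have : 0 < b - a := sub_pos.2 hab
  dsimp only
  gcongr

/-- `g` is the paper's `G_r` (for `w = r`) on `[s 0, s (M - 1)]`; elsewhere it is unconstrained. -/
def IsRegularizedCDF (M : ℕ) (s w : ℕ → ℝ) (g : ℝ → ℝ) : Prop :=
  ∀ k : ℕ, 1 ≤ k → k ≤ M - 1 → ∀ x : ℝ, s (k - 1) ≤ x → x ≤ s k →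
    g x = ∑ i ∈ Finset.range k, w i + w k * (x - s (k - 1)) / (s k - s (k - 1))

namespace IsRegularizedCDF

variable {M : ℕ} {s w : ℕ → ℝ} {g : ℝ → ℝ}

theorem eqOn_Icc_succ (hg : IsRegularizedCDF M s w g) {j : ℕ} (hj : j < M - 1) :
    EqOn g (fun y => ∑ i ∈ Finset.range (j + 1), w i + w (j + 1) * (y - s j) / (s (j + 1) - s j))
      (Icc (s j) (s (j + 1))) :=
  fun y hy => hg (j + 1) (by omega) (by omega) y hy.1 hy.2

theorem continuousOn (hg : IsRegularizedCDF M s w g) (hs : MonotoneOn s (Iic (M - 1))) :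
    ContinuousOn g (Icc (s 0) (s (M - 1))) :=
  continuousOn_Icc_of_forall_Icc_succ hs fun j hj =>
    (by fun_prop : Continuous _).continuousOn.congr (hg.eqOn_Icc_succ hj)

theorem strictMonoOn (hg : IsRegularizedCDF M s w g) (hs : StrictMonoOn s (Iic (M - 1)))
    (hw : ∀ i < M, 0 < w i) : StrictMonoOn g (Icc (s 0) (s (M - 1))) :=
  strictMonoOn_Icc_of_forall_Icc_succ hs.monotoneOn fun j hj =>
    ((strictMono_add_mul_sub_div (hs (mem_Iic.2 (by omega)) (mem_Iic.2 (by omega)) j.lt_succ_self)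
      (hw (j + 1) (by omega))).strictMonoOn _).congr (hg.eqOn_Icc_succ hj).symm

theorem apply_last (hg : IsRegularizedCDF M s w g) (hs : StrictMonoOn s (Iic (M - 1)))
    (hM : 2 ≤ M) : g (s (M - 1)) = ∑ i ∈ Finset.range M, w i := by
  have hlt : s (M - 1 - 1) < s (M - 1) := hs (mem_Iic.2 (by omega)) (mem_Iic.2 le_rfl) (by omega)
  obtain ⟨n, rfl⟩ : ∃ n, M = n + 1 := ⟨M - 1, by omega⟩
  rw [hg (n + 1 - 1) (by omega) le_rfl _ hlt.le le_rfl, mul_div_assoc, div_self (sub_pos.2 hlt).ne',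
    mul_one, Finset.sum_range_succ]
  rfl

theorem sub_mul_sum_add_sub_mul_sum (hg : IsRegularizedCDF M s w g) {k : ℕ} (hk : 1 ≤ k)
    (hkM : k ≤ M - 1) (hsk : s (k - 1) < s k) {x : ℝ} (hx : s (k - 1) ≤ x) (hxk : x ≤ s k) :
    (s k - x) * ∑ i ∈ Finset.range k, w i + (x - s (k - 1)) * ∑ i ∈ Finset.range (k + 1), w i =
      (s k - s (k - 1)) * g x := by
  rw [hg k hk hkM x hx hxk, Finset.sum_range_succ]
  field_simp [(sub_pos.2 hsk).ne']
  ring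

variable {α : ℝ} {k : ℕ} {x : ℝ}

theorem sInf_superlevel_le_iff_interp (hg : IsRegularizedCDF M s w g)
    (hs : StrictMonoOn s (Iic (M - 1))) (hw : ∀ i < M, 0 < w i) (hα : α ≤ ∑ i ∈ Finset.range M, w i)
    (hk : 1 ≤ k) (hkM : k ≤ M - 1) (hx : s (k - 1) ≤ x) (hxk : x ≤ s k) :
    sInf {y | s 0 ≤ y ∧ y ≤ s (M - 1) ∧ α ≤ g y} ≤ x ↔
      α * (s k - s (k - 1)) ≤ (s k - x) * ∑ i ∈ Finset.range k, w i +
        (x - s (k - 1)) * ∑ i ∈ Finset.range (k + 1), w i := by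
  have hsk : s (k - 1) < s k := hs (mem_Iic.2 (by omega)) (mem_Iic.2 hkM) (by omega)
  rw [hg.sub_mul_sum_add_sub_mul_sum hk hkM hsk hx hxk, mul_comm α,
    mul_le_mul_iff_right₀ (sub_pos.2 hsk)]
  exact sInf_superlevel_le_iff (hg.strictMonoOn hs hw).monotoneOn (hg.continuousOn hs.monotoneOn)
    (hg.apply_last hs (by omega) ▸ hα)
    ⟨(hs.monotoneOn (mem_Iic.2 (Nat.zero_le _)) (mem_Iic.2 (by omega)) (Nat.zero_le _)).trans hx,
      hxk.trans (hs.monotoneOn (mem_Iic.2 hkM) (mem_Iic.2 le_rfl) hkM)⟩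

theorem le_sInf_superlevel_iff_interp (hg : IsRegularizedCDF M s w g)
    (hs : StrictMonoOn s (Iic (M - 1))) (hw : ∀ i < M, 0 < w i) (hα : α ≤ ∑ i ∈ Finset.range M, w i)
    (hk : 1 ≤ k) (hkM : k ≤ M - 1) (hx : s (k - 1) < x) (hxk : x ≤ s k) :
    x ≤ sInf {y | s 0 ≤ y ∧ y ≤ s (M - 1) ∧ α ≤ g y} ↔
      (s k - x) * ∑ i ∈ Finset.range k, w i + (x - s (k - 1)) * ∑ i ∈ Finset.range (k + 1), w i ≤
        α * (s k - s (k - 1)) := by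
  have hsk : s (k - 1) < s k := hs (mem_Iic.2 (by omega)) (mem_Iic.2 hkM) (by omega)
  rw [hg.sub_mul_sum_add_sub_mul_sum hk hkM hsk hx.le hxk, mul_comm α,
    mul_le_mul_iff_right₀ (sub_pos.2 hsk)]
  exact le_sInf_superlevel_iff (hg.strictMonoOn hs hw) (hg.continuousOn hs.monotoneOn)
    (hg.apply_last hs (by omega) ▸ hα)
    ((hs.monotoneOn (mem_Iic.2 (Nat.zero_le _)) (mem_Iic.2 (by omega)) (Nat.zero_le _)).trans_lt hx)
    (hxk.trans (hs.monotoneOn (mem_Iic.2 hkM) (mem_Iic.2 le_rfl) hkM))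

end IsRegularizedCDF

theorem isLinearMap_sum_range (k : ℕ) : IsLinearMap ℝ fun r : ℕ → ℝ => ∑ i ∈ Finset.range k, r i :=
  ⟨fun _ _ => Finset.sum_add_distrib, fun _ _ => (Finset.mul_sum _ _ _).symm⟩

theorem isLinearMap_mul_sum_range_add (a b : ℝ) (k : ℕ) :
    IsLinearMap ℝ fun r : ℕ → ℝ =>
      a * ∑ i ∈ Finset.range k, r i + b * ∑ i ∈ Finset.range (k + 1), r i :=
  ⟨fun r r' => by simp only [(isLinearMap_sum_range _).map_add]; ring,
    fun c r => by simp only [(isLinearMap_sum_range _).map_smul, smul_eq_mul]; ring⟩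

theorem convex_setOf_pos_sum_eq_one_and {M : ℕ} {p : (ℕ → ℝ) → Prop} {H : Set (ℕ → ℝ)}
    (hH : Convex ℝ H)
    (hp : ∀ r, (∀ i < M, 0 < r i) → ∑ i ∈ Finset.range M, r i = 1 → (p r ↔ r ∈ H)) :
    Convex ℝ {r : ℕ → ℝ | (∀ i < M, 0 < r i) ∧ ∑ i ∈ Finset.range M, r i = 1 ∧ p r} := by
  have hsimplex : Convex ℝ {r : ℕ → ℝ | (∀ i < M, 0 < r i) ∧ ∑ i ∈ Finset.range M, r i = 1} :=
    (convex_pi fun _ _ => convex_Ioi 0).inter (convex_hyperplane (isLinearMap_sum_range M) 1)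
  convert hsimplex.inter hH using 1
  ext r
  exact ⟨fun ⟨hpos, hsum, hr⟩ => ⟨⟨hpos, hsum⟩, (hp r hpos hsum).1 hr⟩,
    fun ⟨⟨hpos, hsum⟩, hr⟩ => ⟨hpos, hsum, (hp r hpos hsum).2 hr⟩⟩

theorem regularized_quantile_one_convex_general (M : ℕ) (s : ℕ → ℝ)
    (hs : ∀ i j : ℕ, i < j → j < M → s i < s j)
    (F : (ℕ → ℝ) → ℕ → ℝ) (hF : ∀ r k, F r k = ∑ i ∈ Finset.range k, r i)
    (G : (ℕ → ℝ) → ℝ → ℝ)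
    (hG : ∀ r : ℕ → ℝ, (∀ i < M, 0 < r i) → (∑ i ∈ Finset.range M, r i) = 1 →
        ∀ k : ℕ, 1 ≤ k → k ≤ M - 1 → ∀ x : ℝ, s (k - 1) ≤ x → x ≤ s k →
          G r x = F r k + r k * (x - s (k - 1)) / (s k - s (k - 1)))
    (χ : (ℕ → ℝ) → ℝ → ℝ)
    (hχ : ∀ r α, χ r α = sInf {x | s 0 ≤ x ∧ x ≤ s (M - 1) ∧ α ≤ G r x}) :
    ∀ α : ℝ, 0 ≤ α → α ≤ 1 →
    ∀ k : ℕ, 1 ≤ k → k ≤ M - 1 →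
    ∀ x : ℝ, s (k - 1) < x → x ≤ s k →
      (∀ r : ℕ → ℝ, (∀ i < M, 0 < r i) → (∑ i ∈ Finset.range M, r i) = 1 →
        ((χ r α ≤ x ↔
            α * (s k - s (k - 1)) ≤ (s k - x) * F r k + (x - s (k - 1)) * F r (k + 1)) ∧
         (x ≤ χ r α ↔
            (s k - x) * F r k + (x - s (k - 1)) * F r (k + 1) ≤ α * (s k - s (k - 1))))) ∧
      Convex ℝ {r : ℕ → ℝ | (∀ i < M, 0 < r i) ∧ (∑ i ∈ Finset.range M, r i) = 1 ∧
        χ r α ≤ x} ∧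
      Convex ℝ {r : ℕ → ℝ | (∀ i < M, 0 < r i) ∧ (∑ i ∈ Finset.range M, r i) = 1 ∧
        x ≤ χ r α} := by
  intro α _ hα1 k hk hkM x hx hxk
  obtain rfl : F = fun r k => ∑ i ∈ Finset.range k, r i := funext₂ hF
  obtain rfl : χ = fun r α => sInf {x | s 0 ≤ x ∧ x ≤ s (M - 1) ∧ α ≤ G r x} := funext₂ hχ
  have hs' : StrictMonoOn s (Iic (M - 1)) := fun i _ j hj hij =>
    hs i j hij (by rw [mem_Iic] at hj; omega)
  have key (r : ℕ → ℝ) (hpos : ∀ i < M, 0 < r i) (hsum : ∑ i ∈ Finset.range M, r i = 1) :=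
    have hGr : IsRegularizedCDF M s r (G r) := hG r hpos hsum
    And.intro (hGr.sInf_superlevel_le_iff_interp hs' hpos (hsum ▸ hα1) hk hkM hx.le hxk)
      (hGr.le_sInf_superlevel_iff_interp hs' hpos (hsum ▸ hα1) hk hkM hx hxk)
  exact ⟨key,
    convex_setOf_pos_sum_eq_one_and (convex_halfSpace_ge (isLinearMap_mul_sum_range_add _ _ k) _)
      fun r hpos hsum => (key r hpos hsum).1,
    convex_setOf_pos_sum_eq_one_and (convex_halfSpace_le (isLinearMap_mul_sum_range_add _ _ k) _)
      fun r hpos hsum => (key r hpos hsum).2⟩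

/-- Characterization of the regularized quantile of a positive
probability vector `r` on `s_1 < … < s_M` (0-indexed here as `s 0 < … < s (M-1)`):
with `F r k = Σ_{i<k} r i` the cumulative sums, `G r` the piecewise-linear regularized
c.d.f. and `χ r α = min{x ∈ [s 0, s (M-1)] : G r x ≥ α}` the regularized `α`-quantile,
for every `k` with `1 ≤ k ≤ M-1` and every `x` with `s (k-1) < x ≤ s k` one has
`χ r α ≤ x ↔ (s k − x) F r k + (x − s (k-1)) F r (k+1) ≥ α (s k − s (k-1))` and
`χ r α ≥ x ↔ (s k − x) F r k + (x − s (k-1)) F r (k+1) ≤ α (s k − s (k-1))`;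
consequently both level sets of `χ · α` within the positive probability vectors are
cut out by a single nonstrict linear inequality, i.e. they are convex
(the regularized quantile is 1-convex). -/
theorem regularized_quantile_one_convex (M : ℕ) (hM : 1 ≤ M) (s : ℕ → ℝ)
    (hs : ∀ i j : ℕ, i < j → j < M → s i < s j)
    (F : (ℕ → ℝ) → ℕ → ℝ) (hF : ∀ r k, F r k = ∑ i ∈ Finset.range k, r i)
    (G : (ℕ → ℝ) → ℝ → ℝ)
    (hG : ∀ r : ℕ → ℝ, (∀ i < M, 0 < r i) → (∑ i ∈ Finset.range M, r i) = 1 →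
        ∀ k : ℕ, 1 ≤ k → k ≤ M - 1 → ∀ x : ℝ, s (k - 1) ≤ x → x ≤ s k →
          G r x = F r k + r k * (x - s (k - 1)) / (s k - s (k - 1)))
    (χ : (ℕ → ℝ) → ℝ → ℝ)
    (hχ : ∀ r α, χ r α = sInf {x | s 0 ≤ x ∧ x ≤ s (M - 1) ∧ α ≤ G r x}) :
    ∀ α : ℝ, 0 ≤ α → α ≤ 1 →
    ∀ k : ℕ, 1 ≤ k → k ≤ M - 1 →
    ∀ x : ℝ, s (k - 1) < x → x ≤ s k →
      (∀ r : ℕ → ℝ, (∀ i < M, 0 < r i) → (∑ i ∈ Finset.range M, r i) = 1 →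
        ((χ r α ≤ x ↔
            α * (s k - s (k - 1)) ≤ (s k - x) * F r k + (x - s (k - 1)) * F r (k + 1)) ∧
         (x ≤ χ r α ↔
            (s k - x) * F r k + (x - s (k - 1)) * F r (k + 1) ≤ α * (s k - s (k - 1))))) ∧
      Convex ℝ {r : ℕ → ℝ | (∀ i < M, 0 < r i) ∧ (∑ i ∈ Finset.range M, r i) = 1 ∧
        χ r α ≤ x} ∧
      Convex ℝ {r : ℕ → ℝ | (∀ i < M, 0 < r i) ∧ (∑ i ∈ Finset.range M, r i) = 1 ∧
        x ≤ χ r α} :=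
  regularized_quantile_one_convex_general M s hs F hF G hG χ hχ
end
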